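/- arXiv:1201.1945 — 3 statements merged into one kernel-verified Lean document; each statement's English description precedes it below -/
import Mathlib

section
/- Let φ be a growth function, q₀ ∈ (1,∞] with φ ∈ ℝℍ_{q₀}(ℝⁿ), a a (φ,∞)-atom associated with the ball B, and λ ∈ ℂ. Then ∫_{ℝⁿ} φ(x, 𝒜(λa)(x)) dx ≤ C φ(B, |λ|/‖χ_B‖_{L^φ(ℝⁿ)}) for a constant C independent of a, B, λ. -/
/-!
Write `L = ‖χ_B‖_{L^φ}`, `t₀ = |λ|/L` and `s(x) = L 𝒜(a)(x)`, so that `𝒜(λa) = s t₀` and it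
vanishes off `B`. Monotonicity and upper type 1 give `φ(x, s t₀) ≲ (1 + s) φ(x, t₀)`, so it remains
to bound `∫_B φ(x, t₀) s(x) dx`. By Hölder's inequality with exponents `q, q'`, the reverse Hölder
condition for the weight `φ(·, t₀)` (an `ℝℍ_∞` weight is an `ℝℍ_2` weight) and the atom's bound
`‖s‖_{L^{q'}(B)} ≤ |B|^{1/q'}`, this is `≲ φ(B, t₀)`. Here `L ≠ 0` because `φ(x, t) → ∞`; if
`L = ∞` the atom's `T₂^2` norm vanishes, and so does the left-hand side.
-/

open MeasureTheory Metric Filter ENNReal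

noncomputable section

/-- `φ` is of uniformly lower type `p`. -/
def UnifLowerType {n : ℕ} (p : ℝ) (φ : EuclideanSpace ℝ (Fin n) → ℝ → ℝ) : Prop :=
  ∃ C : ℝ, 0 < C ∧ ∀ (x : EuclideanSpace ℝ (Fin n)) (s t : ℝ), 0 ≤ s → s ≤ 1 → 0 ≤ t →
    φ x (s * t) ≤ C * s ^ p * φ x t

/-- `φ` is of uniformly upper type 1. -/
def UnifUpperType1 {n : ℕ} (φ : EuclideanSpace ℝ (Fin n) → ℝ → ℝ) : Prop :=
  ∃ C : ℝ, 0 < C ∧ ∀ (x : EuclideanSpace ℝ (Fin n)) (s t : ℝ), 1 ≤ s → 0 ≤ t →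
    φ x (s * t) ≤ C * s * φ x t

/-- The uniform Muckenhoupt condition `𝔸_q(ℝⁿ)`. -/
def UniformMuckenhoupt {n : ℕ} (q : ℝ) (φ : EuclideanSpace ℝ (Fin n) → ℝ → ℝ) : Prop :=
  if q = 1 then
    ∃ C : ℝ≥0∞, C ≠ ⊤ ∧ ∀ t : ℝ, 0 ≤ t → ∀ (x : EuclideanSpace ℝ (Fin n)) (r : ℝ), 0 < r →
      (∫⁻ y in ball x r, ENNReal.ofReal (φ y t)) *
        essSup (fun y => ENNReal.ofReal ((φ y t)⁻¹)) (volume.restrict (ball x r))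
        ≤ C * volume (ball x r)
  else
    ∃ C : ℝ≥0∞, C ≠ ⊤ ∧ ∀ t : ℝ, 0 ≤ t → ∀ (x : EuclideanSpace ℝ (Fin n)) (r : ℝ), 0 < r →
      (∫⁻ y in ball x r, ENNReal.ofReal (φ y t)) *
        ((∫⁻ y in ball x r, ENNReal.ofReal (φ y t) ^ (-(1 / (q - 1)))) ^ (q - 1))
        ≤ C * volume (ball x r) ^ q

/-- A growth function in the sense of Ky: `φ(x,·)` is an Orlicz function, `φ(·,t)` is
measurable, `φ` is of uniformly lower type `p` for some `p ∈ (0,1]` and of uniformly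
upper type 1, and `φ ∈ 𝔸_∞(ℝⁿ)`. -/
def IsGrowthFunction {n : ℕ} (φ : EuclideanSpace ℝ (Fin n) → ℝ → ℝ) : Prop :=
  (∀ x, MonotoneOn (φ x) (Set.Ici 0)) ∧
  (∀ x, φ x 0 = 0) ∧
  (∀ x t, 0 < t → 0 < φ x t) ∧
  (∀ x, Tendsto (φ x) atTop atTop) ∧
  (∀ t, Measurable fun x => φ x t) ∧
  (∃ p : ℝ, 0 < p ∧ p ≤ 1 ∧ UnifLowerType p φ) ∧
  UnifUpperType1 φ ∧
  (∃ q : ℝ, 1 ≤ q ∧ UniformMuckenhoupt q φ)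

/-- The Luxembourg "norm" `‖χ_B‖_{L^φ}` of the characteristic function of a set `B`. -/
def luxNorm {n : ℕ} (φ : EuclideanSpace ℝ (Fin n) → ℝ → ℝ) (B : Set (EuclideanSpace ℝ (Fin n))) :
    ℝ≥0∞ :=
  sInf {lam : ℝ≥0∞ | 0 < lam ∧ ∫⁻ x in B, ENNReal.ofReal (φ x lam⁻¹.toReal) ≤ 1}

/-- The Lusin square (area) functional `𝒜` over cones of aperture 1. -/
def sqFn {n : ℕ} (f : EuclideanSpace ℝ (Fin n) × ℝ → ℝ) (x : EuclideanSpace ℝ (Fin n)) : ℝ≥0∞ :=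
  (∫⁻ p in {p : EuclideanSpace ℝ (Fin n) × ℝ | 0 < p.2 ∧ dist x p.1 < p.2},
      ENNReal.ofReal (f p ^ 2 / p.2 ^ (n + 1))) ^ ((1 : ℝ) / 2)


/-- The uniform reverse Hölder condition `ℝℍ_q(ℝⁿ)`, for `q ∈ (1,∞]`. -/
def UniformReverseHolder {n : ℕ} (q : ℝ≥0∞) (φ : EuclideanSpace ℝ (Fin n) → ℝ → ℝ) : Prop :=
  if q = ⊤ then
    ∃ C : ℝ≥0∞, C ≠ ⊤ ∧ ∀ t : ℝ, 0 ≤ t → ∀ (x : EuclideanSpace ℝ (Fin n)) (r : ℝ), 0 < r →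
      essSup (fun y => ENNReal.ofReal (φ y t)) (volume.restrict (ball x r))
        ≤ C * ((∫⁻ y in ball x r, ENNReal.ofReal (φ y t)) / volume (ball x r))
  else
    ∃ C : ℝ≥0∞, C ≠ ⊤ ∧ ∀ t : ℝ, 0 ≤ t → ∀ (x : EuclideanSpace ℝ (Fin n)) (r : ℝ), 0 < r →
      ((∫⁻ y in ball x r, ENNReal.ofReal (φ y t) ^ q.toReal) / volume (ball x r)) ^ (1 / q.toReal)
        ≤ C * ((∫⁻ y in ball x r, ENNReal.ofReal (φ y t)) / volume (ball x r))

/-- The Lusin square functional for complex-valued functions on `ℝ^{n+1}_+`. -/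
def sqFnC {n : ℕ} (f : EuclideanSpace ℝ (Fin n) × ℝ → ℂ) (x : EuclideanSpace ℝ (Fin n)) :
    ℝ≥0∞ :=
  (∫⁻ p in {p : EuclideanSpace ℝ (Fin n) × ℝ | 0 < p.2 ∧ dist x p.1 < p.2},
      ENNReal.ofReal (‖f p‖ ^ 2 / p.2 ^ (n + 1))) ^ ((1 : ℝ) / 2)

/-- The tent over the ball `B(c,r)`. -/
def tent {n : ℕ} (c : EuclideanSpace ℝ (Fin n)) (r : ℝ) : Set (EuclideanSpace ℝ (Fin n) × ℝ) :=
  {p | 0 < p.2 ∧ p.2 ≤ Metric.infDist p.1 (ball c r)ᶜ}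

/-- A `(φ,∞)`-atom associated with the ball `B(c,r)`. -/
def IsTentAtomC {n : ℕ} (φ : EuclideanSpace ℝ (Fin n) → ℝ → ℝ)
    (a : EuclideanSpace ℝ (Fin n) × ℝ → ℂ) (c : EuclideanSpace ℝ (Fin n)) (r : ℝ) : Prop :=
  Function.support a ⊆ tent c r ∧
  ∀ p : ℝ, 1 < p →
    (∫⁻ x, sqFnC a x ^ p) ^ (1 / p) ≤
      ENNReal.ofReal ((volume (ball c r)).toReal ^ (1 / p)) / luxNorm φ (ball c r)

section ReverseHolder

variable {α : Type*} [MeasurableSpace α] {μ : Measure α} {s : Set α}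

theorem rpow_setLAverage_rpow_le_essSup (f : α → ℝ≥0∞) {q : ℝ} (hq : 0 < q) :
    ((∫⁻ x in s, f x ^ q ∂μ) / μ s) ^ (1 / q) ≤ essSup f (μ.restrict s) := by
  set E := essSup f (μ.restrict s)
  have hint : ∫⁻ x in s, f x ^ q ∂μ ≤ E ^ q * μ s := by
    rw [← setLIntegral_const]
    refine lintegral_mono_ae ?_
    filter_upwards [ENNReal.ae_le_essSup f] with x hx
    gcongr
  calc ((∫⁻ x in s, f x ^ q ∂μ) / μ s) ^ (1 / q)
      ≤ (E ^ q) ^ (1 / q) := by gcongr; exact ENNReal.div_le_of_le_mul hint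
    _ = E := by rw [← ENNReal.rpow_mul, mul_one_div_cancel hq.ne', ENNReal.rpow_one]

theorem setLIntegral_mul_le_of_reverseHolder {w G : α → ℝ≥0∞} {q q' : ℝ}
    (hqq' : q.HolderConjugate q') (hs0 : μ s ≠ 0) (hs : μ s ≠ ⊤)
    (hw : AEMeasurable w (μ.restrict s)) (hG : AEMeasurable G (μ.restrict s)) {C : ℝ≥0∞}
    (hwRH : ((∫⁻ x in s, w x ^ q ∂μ) / μ s) ^ (1 / q) ≤ C * ((∫⁻ x in s, w x ∂μ) / μ s))
    (hGq' : (∫⁻ x in s, G x ^ q' ∂μ) ^ (1 / q') ≤ μ s ^ (1 / q')) :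
    ∫⁻ x in s, w x * G x ∂μ ≤ C * ∫⁻ x in s, w x ∂μ := by
  have hq : 0 ≤ 1 / q := by have := hqq'.pos; positivity
  calc ∫⁻ x in s, w x * G x ∂μ
      ≤ (∫⁻ x in s, w x ^ q ∂μ) ^ (1 / q) * (∫⁻ x in s, G x ^ q' ∂μ) ^ (1 / q') :=
        ENNReal.lintegral_mul_le_Lp_mul_Lq _ hqq' hw hG
    _ = ((∫⁻ x in s, w x ^ q ∂μ) / μ s) ^ (1 / q) * μ s ^ (1 / q) *
          (∫⁻ x in s, G x ^ q' ∂μ) ^ (1 / q') := by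
        rw [← ENNReal.mul_rpow_of_nonneg _ _ hq, ENNReal.div_mul_cancel hs0 hs]
    _ ≤ C * ((∫⁻ x in s, w x ∂μ) / μ s) * μ s ^ (1 / q) * μ s ^ (1 / q') := by gcongr
    _ = C * ((∫⁻ x in s, w x ∂μ) / μ s * μ s) := by
        rw [mul_assoc _ (μ s ^ _), ← ENNReal.rpow_add _ _ hs0 hs, one_div, one_div,
          hqq'.inv_add_inv_eq_one, ENNReal.rpow_one, mul_assoc]
    _ = C * ∫⁻ x in s, w x ∂μ := by rw [ENNReal.div_mul_cancel hs0 hs]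

end ReverseHolder

theorem UniformReverseHolder.exists_rpow {n : ℕ} {φ : EuclideanSpace ℝ (Fin n) → ℝ → ℝ}
    {q₀ : ℝ≥0∞} (hRH : UniformReverseHolder q₀ φ) (hq₀ : 1 < q₀) :
    ∃ q : ℝ, 1 < q ∧ ∃ C : ℝ≥0∞, C ≠ ⊤ ∧ ∀ t : ℝ, 0 ≤ t →
      ∀ (x : EuclideanSpace ℝ (Fin n)) (r : ℝ), 0 < r →
        ((∫⁻ y in ball x r, ENNReal.ofReal (φ y t) ^ q) / volume (ball x r)) ^ (1 / q)
          ≤ C * ((∫⁻ y in ball x r, ENNReal.ofReal (φ y t)) / volume (ball x r)) := by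
  unfold UniformReverseHolder at hRH
  split_ifs at hRH with hq₀top
  · obtain ⟨C, hC, hRH⟩ := hRH
    exact ⟨2, one_lt_two, C, hC, fun t ht x r hr =>
      (rpow_setLAverage_rpow_le_essSup _ two_pos).trans (hRH t ht x r hr)⟩
  · refine ⟨q₀.toReal, ?_, hRH⟩
    simpa using (ENNReal.toReal_lt_toReal one_ne_top hq₀top).mpr hq₀

theorem exists_le_one_add_mul_of_unifUpperType1 {n : ℕ}
    {φ : EuclideanSpace ℝ (Fin n) → ℝ → ℝ} (hmono : ∀ x, MonotoneOn (φ x) (Set.Ici 0))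
    (hzero : ∀ x, φ x 0 = 0) (hφ : UnifUpperType1 φ) :
    ∃ C : ℝ, 0 < C ∧ ∀ x (s t : ℝ), 0 ≤ s → 0 ≤ t → φ x (s * t) ≤ C * (1 + s) * φ x t := by
  obtain ⟨C, hC, hφ⟩ := hφ
  refine ⟨max 1 C, by positivity, fun x s t hs ht => ?_⟩
  have hφt : 0 ≤ φ x t := hzero x ▸ hmono x Set.self_mem_Ici ht ht
  rcases le_total s 1 with hs1 | hs1
  · calc φ x (s * t) ≤ φ x t :=
          hmono x (Set.mem_Ici.mpr (by positivity)) ht (mul_le_of_le_one_left ht hs1)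
      _ ≤ max 1 C * (1 + s) * φ x t := by
          refine le_mul_of_one_le_left hφt ?_
          nlinarith [le_max_left 1 C]
  · calc φ x (s * t) ≤ C * s * φ x t := hφ x s t hs1 ht
      _ ≤ max 1 C * (1 + s) * φ x t := by gcongr <;> [exact le_max_right 1 C; linarith]

section SquareFunction

variable {n : ℕ}

theorem measurableSet_cone (x : EuclideanSpace ℝ (Fin n)) :
    MeasurableSet {p : EuclideanSpace ℝ (Fin n) × ℝ | 0 < p.2 ∧ dist x p.1 < p.2} :=
  (measurableSet_lt measurable_const measurable_snd).inter
    (measurableSet_lt (continuous_const.dist continuous_fst).measurable measurable_snd)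

theorem sqFnC_const_mul (a : EuclideanSpace ℝ (Fin n) × ℝ → ℂ) (lam : ℂ)
    (x : EuclideanSpace ℝ (Fin n)) :
    sqFnC (fun p => lam * a p) x = ENNReal.ofReal ‖lam‖ * sqFnC a x := by
  have hsq : ∀ p : EuclideanSpace ℝ (Fin n) × ℝ,
      ENNReal.ofReal (‖lam * a p‖ ^ 2 / p.2 ^ (n + 1)) =
        ENNReal.ofReal ‖lam‖ ^ (2 : ℝ) * ENNReal.ofReal (‖a p‖ ^ 2 / p.2 ^ (n + 1)) := by
    intro p
    rw [ENNReal.rpow_two, ← ENNReal.ofReal_pow (norm_nonneg lam),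
      ← ENNReal.ofReal_mul (by positivity), norm_mul, mul_pow, mul_div_assoc]
  simp only [sqFnC, hsq]
  rw [lintegral_const_mul' _ _ (by simp), ENNReal.mul_rpow_of_nonneg _ _ (by norm_num),
    ← ENNReal.rpow_mul]
  norm_num

theorem measurable_sqFnC {a : EuclideanSpace ℝ (Fin n) × ℝ → ℂ} (ha : Measurable a) :
    Measurable (sqFnC a) := by
  let cone : Set (EuclideanSpace ℝ (Fin n) × (EuclideanSpace ℝ (Fin n) × ℝ)) :=
    {q | 0 < q.2.2 ∧ dist q.1 q.2.1 < q.2.2}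
  have hcone : MeasurableSet cone :=
    (measurableSet_lt measurable_const measurable_snd.snd).inter
      (measurableSet_lt (continuous_fst.dist continuous_snd.fst).measurable measurable_snd.snd)
  have hf : Measurable fun p : EuclideanSpace ℝ (Fin n) × ℝ =>
      ENNReal.ofReal (‖a p‖ ^ 2 / p.2 ^ (n + 1)) :=
    ((ha.norm.pow_const 2).div (measurable_snd.pow_const _)).ennreal_ofReal
  have hsection : ∀ x, (∫⁻ p in {p : EuclideanSpace ℝ (Fin n) × ℝ | 0 < p.2 ∧ dist x p.1 < p.2},
      ENNReal.ofReal (‖a p‖ ^ 2 / p.2 ^ (n + 1))) =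
      ∫⁻ p, cone.indicator (fun q => ENNReal.ofReal (‖a q.2‖ ^ 2 / q.2.2 ^ (n + 1))) (x, p) := by
    intro x
    rw [← lintegral_indicator (measurableSet_cone x)]
    rfl
  unfold sqFnC
  simp_rw [hsection]
  exact ((hf.comp measurable_snd).indicator hcone).lintegral_prod_right'.pow_const _

theorem support_sqFnC_subset_ball {a : EuclideanSpace ℝ (Fin n) × ℝ → ℂ}
    {c : EuclideanSpace ℝ (Fin n)} {r : ℝ} (ha : Function.support a ⊆ tent c r) :
    Function.support (sqFnC a) ⊆ ball c r := by
  intro x hx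
  by_contra hxB
  refine hx ?_
  have hcone : Set.EqOn (fun p : EuclideanSpace ℝ (Fin n) × ℝ =>
      ENNReal.ofReal (‖a p‖ ^ 2 / p.2 ^ (n + 1))) 0
      {p | 0 < p.2 ∧ dist x p.1 < p.2} := by
    intro p hp
    by_cases hap : a p = 0
    · simp [hap]
    · have htent : p.2 ≤ infDist p.1 (ball c r)ᶜ := (ha hap).2
      have := infDist_le_dist_of_mem (x := p.1) (Set.mem_compl hxB)
      rw [dist_comm] at this
      linarith [hp.2]
  rw [sqFnC, setLIntegral_eq_zero (measurableSet_cone x) hcone,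
    ENNReal.zero_rpow_of_pos (by norm_num)]

end SquareFunction

section Luxemburg

variable {n : ℕ} {φ : EuclideanSpace ℝ (Fin n) → ℝ → ℝ} {B : Set (EuclideanSpace ℝ (Fin n))}

theorem setLIntegral_le_one_of_luxNorm_lt (hmono : ∀ x, MonotoneOn (φ x) (Set.Ici 0))
    {t : ℝ} (ht : 0 ≤ t) (hlux : luxNorm φ B < (ENNReal.ofReal t)⁻¹) :
    ∫⁻ x in B, ENNReal.ofReal (φ x t) ≤ 1 := by
  obtain ⟨lam, ⟨hlam, hint⟩, hlt⟩ := sInf_lt_iff.mp hlux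
  have hlam' : t ≤ lam⁻¹.toReal := by
    have := ENNReal.lt_inv_iff_lt_inv.mpr hlt
    exact (ENNReal.ofReal_le_iff_le_toReal (ENNReal.inv_ne_top.mpr hlam.ne')).mp this.le
  refine le_trans (lintegral_mono fun x => ?_) hint
  exact ENNReal.ofReal_le_ofReal (hmono x ht (ht.trans hlam') hlam')

theorem luxNorm_ne_zero (hmono : ∀ x, MonotoneOn (φ x) (Set.Ici 0))
    (htend : ∀ x, Tendsto (φ x) atTop atTop) (hmeas : ∀ t, Measurable fun x => φ x t)
    (hB : volume B ≠ 0) : luxNorm φ B ≠ 0 := by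
  intro hlux
  have hbound : ∀ k : ℕ, ∫⁻ x in B, ENNReal.ofReal (φ x k) ≤ 1 := fun k =>
    setLIntegral_le_one_of_luxNorm_lt hmono k.cast_nonneg (by simp [hlux])
  have hlim := lintegral_tendsto_of_tendsto_of_monotone (μ := volume.restrict B)
    (F := fun _ => ⊤) (fun k => (hmeas k).ennreal_ofReal.aemeasurable)
    (ae_of_all _ fun x k l hkl => ENNReal.ofReal_le_ofReal <|
      hmono x (Set.mem_Ici.mpr k.cast_nonneg) (Set.mem_Ici.mpr l.cast_nonneg)
        (Nat.cast_le.mpr hkl))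
    (ae_of_all _ fun x => ENNReal.tendsto_ofReal_atTop.comp
      ((htend x).comp tendsto_natCast_atTop_atTop))
  have := le_of_tendsto' hlim hbound
  simp [ENNReal.top_mul hB] at this

end Luxemburg

theorem ofReal_phi_mul_toReal_le {n : ℕ} {φ : EuclideanSpace ℝ (Fin n) → ℝ → ℝ} {C : ℝ}
    (hC : 0 ≤ C)
    (htype : ∀ x (s t : ℝ), 0 ≤ s → 0 ≤ t → φ x (s * t) ≤ C * (1 + s) * φ x t)
    {M : ℝ≥0∞} (hM0 : M ≠ 0) (hMt : M ≠ ⊤) {u : ℝ} (hu : 0 ≤ u) (g : ℝ≥0∞)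
    (x : EuclideanSpace ℝ (Fin n)) :
    ENNReal.ofReal (φ x (u * g.toReal)) ≤
      ENNReal.ofReal C * (ENNReal.ofReal (φ x (u / M.toReal)) +
        ENNReal.ofReal (φ x (u / M.toReal)) * (M * g)) := by
  have hM : M.toReal ≠ 0 := ENNReal.toReal_ne_zero.mpr ⟨hM0, hMt⟩
  have hsplit : u * g.toReal = (M.toReal * g.toReal) * (u / M.toReal) := by field_simp
  have hs : ENNReal.ofReal (M.toReal * g.toReal) ≤ M * g := by
    rw [← ENNReal.toReal_mul]
    exact ENNReal.ofReal_toReal_le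
  calc ENNReal.ofReal (φ x (u * g.toReal))
      ≤ ENNReal.ofReal (C * ((1 + M.toReal * g.toReal) * φ x (u / M.toReal))) := by
        rw [hsplit, ← mul_assoc]
        exact ENNReal.ofReal_le_ofReal (htype x _ _ (by positivity) (by positivity))
    _ ≤ ENNReal.ofReal C * ((1 + M * g) * ENNReal.ofReal (φ x (u / M.toReal))) := by
        rw [ENNReal.ofReal_mul hC, ENNReal.ofReal_mul (by positivity),
          ENNReal.ofReal_add zero_le_one (by positivity), ENNReal.ofReal_one]
        gcongr
    _ = _ := by ring

namespace IsTentAtomC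

variable {n : ℕ} {φ : EuclideanSpace ℝ (Fin n) → ℝ → ℝ} {a : EuclideanSpace ℝ (Fin n) × ℝ → ℂ}
  {c : EuclideanSpace ℝ (Fin n)} {r : ℝ}

theorem lintegral_phi_sqFnC_const_mul_eq_zero (hatom : IsTentAtomC φ a c r) (ha : Measurable a)
    (hzero : ∀ x, φ x 0 = 0) (hL : luxNorm φ (ball c r) = ⊤) (lam : ℂ) :
    ∫⁻ x, ENNReal.ofReal (φ x (sqFnC (fun p => lam * a p) x).toReal) = 0 := by
  have h2 := hatom.2 2 one_lt_two
  rw [hL, ENNReal.div_top, nonpos_iff_eq_zero,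
    ENNReal.rpow_eq_zero_iff_of_pos (by norm_num),
    lintegral_eq_zero_iff ((measurable_sqFnC ha).pow_const _)] at h2
  refine (lintegral_congr_ae ?_).trans lintegral_zero
  filter_upwards [h2] with x hx
  simp_all [sqFnC_const_mul]

theorem setLIntegral_rpow_le (hatom : IsTentAtomC φ a c r) (hL0 : luxNorm φ (ball c r) ≠ 0)
    (hLt : luxNorm φ (ball c r) ≠ ⊤) {p : ℝ} (hp : 1 < p) :
    (∫⁻ x in ball c r, (luxNorm φ (ball c r) * sqFnC a x) ^ p) ^ (1 / p) ≤
      volume (ball c r) ^ (1 / p) := by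
  set L := luxNorm φ (ball c r)
  have hp0 : 0 < p := zero_lt_one.trans hp
  have hLp : (L ^ p) ^ (1 / p) = L := by
    rw [← ENNReal.rpow_mul, mul_one_div_cancel hp0.ne', ENNReal.rpow_one]
  calc (∫⁻ x in ball c r, (L * sqFnC a x) ^ p) ^ (1 / p)
      = L * (∫⁻ x in ball c r, sqFnC a x ^ p) ^ (1 / p) := by
        simp_rw [ENNReal.mul_rpow_of_nonneg _ _ hp0.le]
        rw [lintegral_const_mul' _ _ (ENNReal.rpow_ne_top_of_nonneg hp0.le hLt),
          ENNReal.mul_rpow_of_nonneg _ _ (by positivity), hLp]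
    _ ≤ L * (ENNReal.ofReal ((volume (ball c r)).toReal ^ (1 / p)) / L) := by
        gcongr
        exact (ENNReal.rpow_le_rpow (setLIntegral_le_lintegral _ _) (by positivity)).trans
          (hatom.2 p hp)
    _ ≤ volume (ball c r) ^ (1 / p) := by
        rw [ENNReal.mul_div_cancel hL0 hLt, ENNReal.toReal_rpow]
        exact ENNReal.ofReal_toReal_le

theorem lintegral_phi_sqFnC_const_mul_le (hatom : IsTentAtomC φ a c r) (ha : Measurable a)
    (hr : 0 < r) (hzero : ∀ x, φ x 0 = 0) (hmeas : ∀ t, Measurable fun x => φ x t)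
    {C₁ : ℝ} (hC₁ : 0 ≤ C₁)
    (htype : ∀ x (s t : ℝ), 0 ≤ s → 0 ≤ t → φ x (s * t) ≤ C₁ * (1 + s) * φ x t)
    {q : ℝ} (hq : 1 < q) {C₂ : ℝ≥0∞}
    (hRH : ∀ t : ℝ, 0 ≤ t →
      ((∫⁻ y in ball c r, ENNReal.ofReal (φ y t) ^ q) / volume (ball c r)) ^ (1 / q)
        ≤ C₂ * ((∫⁻ y in ball c r, ENNReal.ofReal (φ y t)) / volume (ball c r)))
    (hL0 : luxNorm φ (ball c r) ≠ 0) (hLt : luxNorm φ (ball c r) ≠ ⊤) (lam : ℂ) :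
    ∫⁻ x, ENNReal.ofReal (φ x (sqFnC (fun p => lam * a p) x).toReal) ≤
      ENNReal.ofReal C₁ * (1 + C₂) *
        ∫⁻ x in ball c r, ENNReal.ofReal (φ x (‖lam‖ / (luxNorm φ (ball c r)).toReal)) := by
  set L := luxNorm φ (ball c r)
  set w : EuclideanSpace ℝ (Fin n) → ℝ≥0∞ := fun x => ENNReal.ofReal (φ x (‖lam‖ / L.toReal))
  have hsupp : Function.support (fun x =>
      ENNReal.ofReal (φ x (sqFnC (fun p => lam * a p) x).toReal)) ⊆ ball c r := by
    intro x hx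
    by_contra hxB
    have hax : sqFnC a x = 0 :=
      Function.notMem_support.mp fun h => hxB (support_sqFnC_subset_ball hatom.1 h)
    exact hx (by simp [sqFnC_const_mul, hax, hzero x])
  have hHolder : ∫⁻ x in ball c r, w x * (L * sqFnC a x) ≤ C₂ * ∫⁻ x in ball c r, w x :=
    setLIntegral_mul_le_of_reverseHolder (.conjExponent hq) (measure_ball_pos _ _ hr).ne'
      measure_ball_lt_top.ne (hmeas _).ennreal_ofReal.aemeasurable
      ((measurable_sqFnC ha).const_mul _).aemeasurable (hRH _ (by positivity))
      (hatom.setLIntegral_rpow_le hL0 hLt (Real.HolderConjugate.conjExponent hq).symm.lt)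
  calc ∫⁻ x, ENNReal.ofReal (φ x (sqFnC (fun p => lam * a p) x).toReal)
      = ∫⁻ x in ball c r, ENNReal.ofReal (φ x (sqFnC (fun p => lam * a p) x).toReal) :=
        (setLIntegral_eq_of_support_subset hsupp).symm
    _ ≤ ∫⁻ x in ball c r, ENNReal.ofReal C₁ * (w x + w x * (L * sqFnC a x)) := by
        refine lintegral_mono fun x => ?_
        rw [sqFnC_const_mul, ENNReal.toReal_mul, ENNReal.toReal_ofReal (norm_nonneg lam)]
        exact ofReal_phi_mul_toReal_le hC₁ htype hL0 hLt (norm_nonneg lam) _ x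
    _ = ENNReal.ofReal C₁ *
          ((∫⁻ x in ball c r, w x) + ∫⁻ x in ball c r, w x * (L * sqFnC a x)) := by
        rw [lintegral_const_mul' _ _ ENNReal.ofReal_ne_top,
          lintegral_add_left (hmeas _).ennreal_ofReal]
    _ ≤ ENNReal.ofReal C₁ * ((∫⁻ x in ball c r, w x) + C₂ * ∫⁻ x in ball c r, w x) := by
        gcongr
    _ = ENNReal.ofReal C₁ * (1 + C₂) * ∫⁻ x in ball c r, w x := by ring

end IsTentAtomC

/-- If `φ` is a growth function with `φ ∈ ℝℍ_{q₀}` for some `q₀ ∈ (1,∞]`,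
then for every `(φ,∞)`-atom `a` associated with the ball `B` and every `λ ∈ ℂ`,
`∫ φ(x, 𝒜(λa)(x)) dx ≤ C φ(B, |λ|/‖χ_B‖_{L^φ})`. -/
theorem stmt_14 {n : ℕ} (φ : EuclideanSpace ℝ (Fin n) → ℝ → ℝ)
    (hφ : IsGrowthFunction φ)
    (q₀ : ℝ≥0∞) (hq₀ : 1 < q₀) (hRH : UniformReverseHolder q₀ φ) :
    ∃ C : ℝ, 0 < C ∧
      ∀ (a : EuclideanSpace ℝ (Fin n) × ℝ → ℂ) (c : EuclideanSpace ℝ (Fin n)) (r : ℝ)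
        (lam : ℂ), Measurable a → 0 < r → IsTentAtomC φ a c r →
        ∫⁻ x, ENNReal.ofReal (φ x ((sqFnC (fun p => lam * a p) x).toReal)) ≤
          ENNReal.ofReal C *
            ∫⁻ x in ball c r,
              ENNReal.ofReal (φ x (‖lam‖ / (luxNorm φ (ball c r)).toReal)) := by
  obtain ⟨hmono, hzero, -, htend, hmeas, -, hupper, -⟩ := hφ
  obtain ⟨C₁, hC₁, htype⟩ := exists_le_one_add_mul_of_unifUpperType1 hmono hzero hupper
  obtain ⟨q, hq, C₂, hC₂, hRH⟩ := hRH.exists_rpow hq₀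
  refine ⟨C₁ * (1 + C₂.toReal), by positivity, fun a c r lam ha hr hatom => ?_⟩
  by_cases hL : luxNorm φ (ball c r) = ⊤
  · rw [hatom.lintegral_phi_sqFnC_const_mul_eq_zero ha hzero hL]
    exact zero_le
  have hC : ENNReal.ofReal (C₁ * (1 + C₂.toReal)) = ENNReal.ofReal C₁ * (1 + C₂) := by
    rw [ENNReal.ofReal_mul hC₁.le, ENNReal.ofReal_add zero_le_one ENNReal.toReal_nonneg,
      ENNReal.ofReal_one, ENNReal.ofReal_toReal hC₂]
  rw [hC]
  exact hatom.lintegral_phi_sqFnC_const_mul_le ha hr hzero hmeas hC₁.le htype hq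
    (fun t ht => hRH t ht c r hr)
    (luxNorm_ne_zero hmono htend hmeas (measure_ball_pos _ _ hr).ne') hL lam
end
end

section
/- Let φ be a growth function, q(φ) and i(φ) its critical Muckenhoupt and lower-type indices, ε ∈ (n(q(φ)/i(φ)−1), ∞), and B₀ = B(x₀, δ) a ball. Then there is a constant C > 0 such that for all f ∈ BMO_φ(ℝⁿ), ∫_{ℝⁿ} δ^ε |f(x) − f_{B₀}| / (δ^{n+ε} + |x − x₀|^{n+ε}) dx ≤ C (‖χ_{B₀}‖_{L^φ} / |B₀|) ‖f‖_{BMO_φ}. -/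
open MeasureTheory Metric Filter ENNReal

noncomputable section

/-- The critical Muckenhoupt index `q(φ)`. -/
def qIndex {n : ℕ} (φ : EuclideanSpace ℝ (Fin n) → ℝ → ℝ) : ℝ :=
  sInf {q : ℝ | 1 ≤ q ∧ UniformMuckenhoupt q φ}

/-- The critical uniformly-lower-type index `i(φ)`. -/
def iIndex {n : ℕ} (φ : EuclideanSpace ℝ (Fin n) → ℝ → ℝ) : ℝ :=
  sSup {p : ℝ | 0 < p ∧ UnifLowerType p φ}

/-- The average of `f` over the ball `B(c,r)`. -/
def ballAvg {n : ℕ} (f : EuclideanSpace ℝ (Fin n) → ℝ) (c : EuclideanSpace ℝ (Fin n))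
    (r : ℝ) : ℝ :=
  (volume (ball c r)).toReal⁻¹ * ∫ y in ball c r, f y

/-!
On the dyadic annulus `2^j B₀ \ 2^(j-1) B₀` the kernel is `≲ 2^(n+ε) (2^j δ)^(-(n+ε)) δ^ε`, so the
integral is controlled by `∑ⱼ 2^(-j(n+ε)) δ^(-n) ∫_{2^j B₀} |f - f_{B₀}|`. Pick `q₀ > q(φ)` and
`p₀ < i(φ)` with `φ ∈ 𝔸_{q₀}` of lower type `p₀` and `c := 2^(n q₀ / p₀) < 2^(n+ε)`. The
`𝔸_{q₀}` condition gives `∫_{B(x,R)} φ(·,t) ≲ (R/r)^(n q₀) ∫_{B(x,r)} φ(·,t)`, and combined with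
the lower type this yields `‖χ_{2^j B₀}‖_{L^φ} ≲ c^j ‖χ_{B₀}‖_{L^φ}`. Telescoping the averages
over the dyadic balls then gives `∫_{2^j B₀} |f - f_{B₀}| ≲ (j + 1) c^j ‖χ_{B₀}‖_{L^φ} N`, and
the series `∑ (j + 1) (c / 2^(n+ε))^j` converges.
-/

open Topology

section MeasureTheory

variable {α : Type*} [MeasurableSpace α] {μ : Measure α}

theorem abs_setAverage_sub_setAverage_le {f : α → ℝ} {s t : Set α} (hst : s ⊆ t)
    (hs : μ s ≠ 0) (ht : μ t ≠ ⊤) (hf : IntegrableOn f t μ) :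
    |⨍ x in t, f x ∂μ - ⨍ x in s, f x ∂μ| ≤
      (μ.real s)⁻¹ * ∫ x in t, |f x - ⨍ y in t, f y ∂μ| ∂μ := by
  have hs' : μ s ≠ ⊤ := ne_top_of_le_ne_top ht (measure_mono hst)
  have hs_real : μ.real s ≠ 0 := ENNReal.toReal_ne_zero.2 ⟨hs, hs'⟩
  set a := ⨍ y in t, f y ∂μ
  have hdiff : a - ⨍ x in s, f x ∂μ = (μ.real s)⁻¹ * ∫ x in s, (a - f x) ∂μ := by
    rw [integral_sub (integrableOn_const (C := a) hs') (hf.mono_set hst), setIntegral_const,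
      smul_eq_mul, setAverage_eq, smul_eq_mul, mul_sub, inv_mul_cancel_left₀ hs_real]
  rw [hdiff, abs_mul, abs_of_nonneg (inv_nonneg.2 measureReal_nonneg)]
  gcongr
  calc |∫ x in s, (a - f x) ∂μ| ≤ ∫ x in s, |a - f x| ∂μ := abs_integral_le_integral_abs
    _ = ∫ x in s, |f x - a| ∂μ := by simp only [abs_sub_comm]
    _ ≤ ∫ x in t, |f x - a| ∂μ :=
        setIntegral_mono_set (hf.sub (integrableOn_const (C := a) ht)).abs
          (.of_forall fun _ => abs_nonneg _) hst.eventuallyLE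

theorem setIntegral_abs_sub_setAverage_le_of_oscillation {f : α → ℝ} {S : ℕ → Set α}
    (hS : Monotone S) (hS0 : ∀ i, μ (S i) ≠ 0) (hStop : ∀ i, μ (S i) ≠ ⊤)
    (hf : ∀ i, IntegrableOn f (S i) μ) {D c W : ℝ} (hD : 1 ≤ D) (hDc : D ≤ c) (hW : 0 ≤ W)
    (hvol : ∀ i, μ.real (S (i + 1)) ≤ D * μ.real (S i))
    (hosc : ∀ i, ∫ x in S i, |f x - ⨍ y in S i, f y ∂μ| ∂μ ≤ W * c ^ i) (i : ℕ) :
    ∫ x in S i, |f x - ⨍ y in S 0, f y ∂μ| ∂μ ≤ D * (i + 1) * W * c ^ i := by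
  set a : ℕ → ℝ := fun i => ⨍ y in S i, f y ∂μ
  set V : ℕ → ℝ := fun i => μ.real (S i)
  have hV : ∀ i, 0 < V i := fun i => ENNReal.toReal_pos (hS0 i) (hStop i)
  have hc : 0 ≤ c := by linarith
  have hstep : ∀ i, V (i + 1) * |a (i + 1) - a i| ≤ D * (W * c ^ (i + 1)) := fun i =>
    calc V (i + 1) * |a (i + 1) - a i| ≤ (D * V i) * ((V i)⁻¹ * (W * c ^ (i + 1))) := by
          gcongr
          · exact hvol i
          · exact (abs_setAverage_sub_setAverage_le (hS i.le_succ) (hS0 i) (hStop _)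
              (hf _)).trans (by gcongr; exact hosc _)
      _ = D * (W * c ^ (i + 1)) := by field_simp [(hV i).ne']
  have hdrift : ∀ i, V i * |a i - a 0| ≤ i * (D * (W * c ^ i)) := by
    intro i
    induction i with
    | zero => simp
    | succ i ih =>
      calc V (i + 1) * |a (i + 1) - a 0|
          ≤ V (i + 1) * |a (i + 1) - a i| + V (i + 1) * |a i - a 0| := by
            rw [← mul_add]
            gcongr
            exact abs_sub_le _ _ _
        _ ≤ D * (W * c ^ (i + 1)) + D * (i * (D * (W * c ^ i))) := by
            refine add_le_add (hstep i) ?_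
            calc V (i + 1) * |a i - a 0| ≤ D * V i * |a i - a 0| := by gcongr; exact hvol i
              _ ≤ D * (i * (D * (W * c ^ i))) := by rw [mul_assoc]; gcongr
        _ ≤ D * (W * c ^ (i + 1)) + i * (D * (W * c ^ (i + 1))) := by
            rw [pow_succ]
            have : 0 ≤ (i : ℝ) * D * W * c ^ i := by positivity
            nlinarith
        _ = ((i + 1 : ℕ) : ℝ) * (D * (W * c ^ (i + 1))) := by push_cast; ring
  have hint : IntegrableOn (fun x => |f x - a i|) (S i) μ :=
    (hf i |>.sub (integrableOn_const (C := a i) (hStop i))).abs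
  calc ∫ x in S i, |f x - a 0| ∂μ ≤ ∫ x in S i, (|f x - a i| + |a i - a 0|) ∂μ :=
        integral_mono ((hf i |>.sub (integrableOn_const (C := a 0) (hStop i))).abs)
          (hint.add (integrableOn_const (hStop i))) fun x => abs_sub_le _ _ _
    _ = ∫ x in S i, |f x - a i| ∂μ + V i * |a i - a 0| := by
        rw [integral_add hint (integrableOn_const (hStop i)), setIntegral_const, smul_eq_mul]
    _ ≤ W * c ^ i + i * (D * (W * c ^ i)) := add_le_add (hosc i) (hdrift i)
    _ ≤ D * (i + 1) * W * c ^ i := by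
        have : 0 ≤ W * c ^ i := by positivity
        nlinarith

theorem measure_le_setLIntegral_mul_essSup_inv {w : α → ℝ} (hw : ∀ x, 0 < w x) (hwm : Measurable w)
    {E B : Set α} (hEB : E ⊆ B) :
    μ E ≤ (∫⁻ x in E, ENNReal.ofReal (w x) ∂μ) *
      essSup (fun x => ENNReal.ofReal (w x)⁻¹) (μ.restrict B) := by
  set e := essSup (fun x => ENNReal.ofReal (w x)⁻¹) (μ.restrict B)
  have hinv : ∀ᵐ x ∂μ.restrict E, ENNReal.ofReal (w x)⁻¹ ≤ e :=
    ae_mono (Measure.restrict_mono hEB le_rfl) (ENNReal.ae_le_essSup _)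
  calc μ E = ∫⁻ _ in E, 1 ∂μ := by rw [setLIntegral_const, one_mul]
    _ ≤ ∫⁻ x in E, ENNReal.ofReal (w x) * e ∂μ := by
        refine lintegral_mono_ae (hinv.mono fun x hx => ?_)
        calc (1 : ℝ≥0∞) = ENNReal.ofReal (w x) * ENNReal.ofReal (w x)⁻¹ := by
              rw [← ENNReal.ofReal_mul (hw x).le, mul_inv_cancel₀ (hw x).ne', ENNReal.ofReal_one]
          _ ≤ ENNReal.ofReal (w x) * e := by gcongr
    _ = (∫⁻ x in E, ENNReal.ofReal (w x) ∂μ) * e :=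
        lintegral_mul_const'' _ (ENNReal.measurable_ofReal.comp hwm).aemeasurable

theorem measure_rpow_le_setLIntegral_mul_setLIntegral_rpow {w : α → ℝ} {q : ℝ} (hq : 1 < q)
    (hw : ∀ x, 0 < w x) (hwm : Measurable w) {E B : Set α} (hEB : E ⊆ B) :
    μ E ^ q ≤ (∫⁻ x in E, ENNReal.ofReal (w x) ∂μ) *
      (∫⁻ x in B, ENNReal.ofReal (w x) ^ (-(1 / (q - 1))) ∂μ) ^ (q - 1) := by
  set W : α → ℝ≥0∞ := fun x => ENNReal.ofReal (w x)
  have hq0 : 0 < q := one_pos.trans hq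
  have hpq : q.HolderConjugate (q / (q - 1)) := .conjExponent hq
  have hW0 : ∀ x, W x ≠ 0 := fun x => ENNReal.ofReal_pos.2 (hw x) |>.ne'
  have hWm : Measurable W := ENNReal.measurable_ofReal.comp hwm
  -- Hölder for `1 = W^(1/q) W^(-1/q)` with exponents `q` and `q/(q-1)`
  have holder := ENNReal.lintegral_mul_le_Lp_mul_Lq (μ.restrict E) hpq
    (hWm.pow_const (1 / q)).aemeasurable (hWm.pow_const (-(1 / q))).aemeasurable
  have hone : ∀ x, ((fun x => W x ^ (1 / q)) * fun x => W x ^ (-(1 / q))) x = 1 := fun x => by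
    rw [Pi.mul_apply, ← ENNReal.rpow_add _ _ (hW0 x) ENNReal.ofReal_ne_top, add_neg_cancel,
      ENNReal.rpow_zero]
  have h1 : ∀ x, (W x ^ (1 / q)) ^ q = W x := fun x => by
    rw [← ENNReal.rpow_mul, one_div_mul_cancel hq0.ne', ENNReal.rpow_one]
  have h2 : ∀ x, (W x ^ (-(1 / q))) ^ (q / (q - 1)) = W x ^ (-(1 / (q - 1))) := fun x => by
    rw [← ENNReal.rpow_mul]; congr 1; field_simp
  simp only [lintegral_congr hone, lintegral_one, Measure.restrict_apply_univ, h1, h2] at holder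
  calc μ E ^ q ≤ ((∫⁻ x in E, W x ∂μ) ^ (1 / q) *
        (∫⁻ x in B, W x ^ (-(1 / (q - 1))) ∂μ) ^ (1 / (q / (q - 1)))) ^ q := by
        gcongr
        exact holder.trans (by gcongr)
    _ = (∫⁻ x in E, W x ∂μ) * (∫⁻ x in B, W x ^ (-(1 / (q - 1))) ∂μ) ^ (q - 1) := by
        rw [ENNReal.mul_rpow_of_nonneg _ _ hq0.le, ← ENNReal.rpow_mul, ← ENNReal.rpow_mul,
          one_div_mul_cancel hq0.ne', ENNReal.rpow_one]
        congr 2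
        field_simp

end MeasureTheory

section Kernel

variable {E : Type*} [NormedAddCommGroup E]

theorem rpow_le_two_rpow_mul_of_mem_disjointed {x₀ x : E} {δ s : ℝ} (hδ : 0 < δ) (hs : 0 ≤ s)
    {j : ℕ} (hx : x ∈ disjointed (fun j : ℕ => ball x₀ (2 ^ j * δ)) j) :
    (2 ^ j * δ) ^ s ≤ 2 ^ s * (δ ^ s + ‖x - x₀‖ ^ s) := by
  cases j with
  | zero =>
    rw [pow_zero, one_mul]
    nlinarith [Real.one_le_rpow one_le_two hs, Real.rpow_nonneg hδ.le s,
      Real.rpow_nonneg (norm_nonneg (x - x₀)) s]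
  | succ j =>
    have hmono : Monotone fun j : ℕ => ball x₀ (2 ^ j * δ) := fun i k hik =>
      ball_subset_ball (by gcongr; norm_num)
    rw [← Order.succ_eq_add_one, hmono.disjointed_succ (not_isMax j)] at hx
    have hfar : 2 ^ j * δ ≤ ‖x - x₀‖ := by simpa [dist_eq_norm] using hx.2
    calc (2 ^ (j + 1) * δ) ^ s = 2 ^ s * (2 ^ j * δ) ^ s := by
          rw [pow_succ, mul_comm _ (2 : ℝ), mul_assoc, Real.mul_rpow zero_le_two (by positivity)]
      _ ≤ 2 ^ s * (δ ^ s + ‖x - x₀‖ ^ s) := by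
          gcongr
          exact le_add_of_nonneg_of_le (by positivity) (by gcongr)

theorem lintegral_div_add_rpow_norm_le_tsum [MeasurableSpace E] [OpensMeasurableSpace E]
    (μ : Measure E) {g : E → ℝ} (hg : 0 ≤ g) (x₀ : E)
    {δ s : ℝ} (hδ : 0 < δ) (hs : 0 ≤ s) :
    ∫⁻ x, ENNReal.ofReal (g x / (δ ^ s + ‖x - x₀‖ ^ s)) ∂μ ≤
      ∑' j : ℕ, ENNReal.ofReal (2 ^ s / (2 ^ j * δ) ^ s) *
        ∫⁻ x in ball x₀ (2 ^ j * δ), ENNReal.ofReal (g x) ∂μ := by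
  set B : ℕ → Set E := fun j => ball x₀ (2 ^ j * δ)
  have hcover : ⋃ j, disjointed B j = Set.univ := by
    refine iUnion_disjointed.trans (Set.eq_univ_of_forall fun x => Set.mem_iUnion.2 ?_)
    obtain ⟨j, hj⟩ := pow_unbounded_of_one_lt (dist x x₀ / δ) one_lt_two
    exact ⟨j, mem_ball.2 ((div_lt_iff₀ hδ).1 hj)⟩
  have hpiece : ∀ j, ∀ x ∈ disjointed B j, ENNReal.ofReal (g x / (δ ^ s + ‖x - x₀‖ ^ s)) ≤
      ENNReal.ofReal (2 ^ s / (2 ^ j * δ) ^ s) * ENNReal.ofReal (g x) := by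
    intro j x hx
    have hden : 0 < δ ^ s + ‖x - x₀‖ ^ s := by positivity
    rw [← ENNReal.ofReal_mul (by positivity)]
    refine ENNReal.ofReal_le_ofReal ?_
    rw [div_mul_eq_mul_div, le_div_iff₀ (by positivity), div_mul_eq_mul_div, div_le_iff₀ hden]
    have := mul_le_mul_of_nonneg_left (rpow_le_two_rpow_mul_of_mem_disjointed hδ hs hx) (hg x)
    linarith
  calc ∫⁻ x, ENNReal.ofReal (g x / (δ ^ s + ‖x - x₀‖ ^ s)) ∂μ
      = ∫⁻ x in ⋃ j, disjointed B j, ENNReal.ofReal (g x / (δ ^ s + ‖x - x₀‖ ^ s)) ∂μ := by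
        rw [hcover, Measure.restrict_univ]
    _ ≤ ∑' j, ∫⁻ x in disjointed B j, ENNReal.ofReal (g x / (δ ^ s + ‖x - x₀‖ ^ s)) ∂μ :=
        lintegral_iUnion_le _ _
    _ ≤ _ := by
        refine ENNReal.tsum_le_tsum fun j => ?_
        calc _ ≤ ∫⁻ x in disjointed B j,
              ENNReal.ofReal (2 ^ s / (2 ^ j * δ) ^ s) * ENNReal.ofReal (g x) ∂μ :=
              setLIntegral_mono' (.disjointed (fun _ => measurableSet_ball) j) (hpiece j)
          _ = ENNReal.ofReal (2 ^ s / (2 ^ j * δ) ^ s) *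
                ∫⁻ x in disjointed B j, ENNReal.ofReal (g x) ∂μ :=
              lintegral_const_mul' _ _ ENNReal.ofReal_ne_top
          _ ≤ _ := by gcongr; exact disjointed_subset B j

theorem addHaar_ball_scale [NormedSpace ℝ E] [MeasurableSpace E] [BorelSpace E]
    [FiniteDimensional ℝ E] (μ : Measure E) [μ.IsAddHaarMeasure] (x : E) {a : ℝ} (ha : 0 < a)
    (r : ℝ) : μ (ball x (a * r)) = ENNReal.ofReal (a ^ Module.finrank ℝ E) * μ (ball x r) := by
  rw [Measure.addHaar_ball_mul_of_pos μ x ha, Measure.addHaar_ball_center μ x r]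

theorem lintegral_abs_sub_setAverage_div_le [NormedSpace ℝ E] [MeasurableSpace E] [BorelSpace E]
    [FiniteDimensional ℝ E] (μ : Measure E) [μ.IsAddHaarMeasure] {f : E → ℝ}
    (hf : LocallyIntegrable f μ) (x₀ : E) {δ s c W : ℝ} (hδ : 0 < δ)
    (hc : 2 ^ Module.finrank ℝ E ≤ c) (hcs : c < 2 ^ s) (hW : 0 ≤ W)
    (hosc : ∀ j : ℕ, ∫ x in ball x₀ (2 ^ j * δ), |f x - ⨍ y in ball x₀ (2 ^ j * δ), f y ∂μ| ∂μ ≤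
      W * c ^ j) :
    ∫⁻ x, ENNReal.ofReal (|f x - ⨍ y in ball x₀ δ, f y ∂μ| / (δ ^ s + ‖x - x₀‖ ^ s)) ∂μ ≤
      ENNReal.ofReal (2 ^ s / δ ^ s * 2 ^ Module.finrank ℝ E * W / (1 - c / 2 ^ s) ^ 2) := by
  set d := Module.finrank ℝ E
  set B : ℕ → Set E := fun j => ball x₀ (2 ^ j * δ)
  set m := ⨍ y in ball x₀ δ, f y ∂μ
  have h1d : (1 : ℝ) ≤ 2 ^ d := one_le_pow₀ one_le_two
  have hs : 0 ≤ s := by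
    by_contra! hs
    linarith [Real.rpow_le_one_of_one_le_of_nonpos one_le_two hs.le]
  have hρ0 : 0 ≤ c / 2 ^ s := div_nonneg (h1d.trans hc |> zero_le_one.trans) (by positivity)
  have hρ1 : c / 2 ^ s < 1 := (div_lt_one (by positivity)).2 hcs
  have hint : ∀ j, IntegrableOn f (B j) μ := fun j =>
    (hf.integrableOn_isCompact (isCompact_closedBall _ _)).mono_set ball_subset_closedBall
  have hint_abs : ∀ j, IntegrableOn (fun x => |f x - m|) (B j) μ := fun j =>
    ((hint j).sub (integrableOn_const (C := m) measure_ball_lt_top.ne)).abs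
  have hvol : ∀ j, μ.real (B (j + 1)) ≤ 2 ^ d * μ.real (B j) := fun j => by
    simp only [B, measureReal_def, pow_succ, mul_comm _ (2 : ℝ), mul_assoc,
      addHaar_ball_scale μ x₀ two_pos, ENNReal.toReal_mul]
    rw [ENNReal.toReal_ofReal (by positivity)]
  have htel : ∀ j : ℕ, ∫ x in B j, |f x - m| ∂μ ≤ 2 ^ d * (j + 1) * W * c ^ j := by
    have := setIntegral_abs_sub_setAverage_le_of_oscillation
      (fun i k hik => ball_subset_ball (by gcongr; norm_num))
      (fun j => (measure_ball_pos μ x₀ (by positivity)).ne') (fun j => measure_ball_lt_top.ne)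
      hint h1d hc hW hvol hosc
    simpa only [B, pow_zero, one_mul] using this
  have hsum : HasSum (fun j : ℕ => ((j : ℝ) + 1) * (c / 2 ^ s) ^ j) (1 / (1 - c / 2 ^ s) ^ 2) := by
    simpa using hasSum_choose_mul_geometric_of_norm_lt_one 1
      (by rwa [Real.norm_of_nonneg hρ0] : ‖c / 2 ^ s‖ < 1)
  calc ∫⁻ x, ENNReal.ofReal (|f x - m| / (δ ^ s + ‖x - x₀‖ ^ s)) ∂μ
      ≤ ∑' j : ℕ, ENNReal.ofReal (2 ^ s / (2 ^ j * δ) ^ s) *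
          ∫⁻ x in B j, ENNReal.ofReal |f x - m| ∂μ :=
        lintegral_div_add_rpow_norm_le_tsum μ (fun x => abs_nonneg _) x₀ hδ hs
    _ ≤ ∑' j : ℕ, ENNReal.ofReal
          (2 ^ s / δ ^ s * 2 ^ d * W * (((j : ℝ) + 1) * (c / 2 ^ s) ^ j)) := by
        refine ENNReal.tsum_le_tsum fun j => ?_
        rw [← ofReal_integral_eq_lintegral_ofReal (hint_abs j) (.of_forall fun _ => abs_nonneg _),
          ← ENNReal.ofReal_mul (by positivity)]
        refine ENNReal.ofReal_le_ofReal ?_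
        calc 2 ^ s / (2 ^ j * δ) ^ s * ∫ x in B j, |f x - m| ∂μ
            ≤ 2 ^ s / (2 ^ j * δ) ^ s * (2 ^ d * (j + 1) * W * c ^ j) := by
              gcongr; exact htel j
          _ = 2 ^ s / δ ^ s * 2 ^ d * W * (((j : ℝ) + 1) * (c / 2 ^ s) ^ j) := by
              rw [Real.mul_rpow (by positivity) hδ.le, ← Real.rpow_pow_comm zero_le_two, div_pow]
              field_simp
    _ = ENNReal.ofReal (2 ^ s / δ ^ s * 2 ^ d * W / (1 - c / 2 ^ s) ^ 2) := by
        rw [← ENNReal.ofReal_tsum_of_nonneg (fun j => by positivity)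
          (hsum.summable.mul_left _), tsum_mul_left, hsum.tsum_eq, mul_one_div]

end Kernel

theorem exists_mem_Ioc_mul_rpow_lt_one (a : ℝ) {p : ℝ} (hp : 0 < p) :
    ∃ s ∈ Set.Ioc (0 : ℝ) 1, a * s ^ p < 1 := by
  have hlim : Tendsto (fun s : ℝ => a * s ^ p) (𝓝[>] 0) (𝓝 0) := by
    have : ContinuousAt (fun s : ℝ => a * s ^ p) 0 :=
      continuousAt_const.mul (Real.continuousAt_rpow_const 0 p (.inr hp.le))
    simpa [Real.zero_rpow hp.ne'] using this.tendsto.mono_left nhdsWithin_le_nhds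
  exact ((hlim.eventually (gt_mem_nhds one_pos)).and (Ioc_mem_nhdsGT one_pos)).exists.imp
    fun s hs => ⟨hs.2, hs.1⟩

section GrowthFunction

variable {n : ℕ} {φ : EuclideanSpace ℝ (Fin n) → ℝ → ℝ}

theorem UnifLowerType.le_one {p : ℝ} (hp : UnifLowerType p φ) (hup : UnifUpperType1 φ)
    (hpos : ∀ x t, 0 < t → 0 < φ x t) : p ≤ 1 := by
  obtain ⟨Cp, hCp, hlow⟩ := hp
  obtain ⟨Cu, hCu, hupp⟩ := hup
  by_contra! hp1
  obtain ⟨s, ⟨hs0, hs1⟩, hs⟩ := exists_mem_Ioc_mul_rpow_lt_one (Cu * Cp) (sub_pos.2 hp1)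
  have hφ1 := hpos 0 1 one_pos
  have hup1 := hupp 0 s⁻¹ s (one_le_inv₀ hs0 |>.2 hs1) hs0.le
  have hlow1 := hlow 0 s 1 hs0.le hs1 zero_le_one
  rw [inv_mul_cancel₀ hs0.ne'] at hup1
  rw [mul_one] at hlow1
  have hsp : s ^ p = s ^ (p - 1) * s := by
    rw [← Real.rpow_add_one hs0.ne', sub_add_cancel]
  have : φ 0 1 ≤ Cu * Cp * s ^ (p - 1) * φ 0 1 := by
    calc φ 0 1 ≤ Cu * s⁻¹ * φ 0 s := hup1
      _ ≤ Cu * s⁻¹ * (Cp * s ^ p * φ 0 1) := by gcongr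
      _ = Cu * Cp * s ^ (p - 1) * φ 0 1 := by rw [hsp]; field_simp
  nlinarith

theorem IsGrowthFunction.exists_exponents (hφ : IsGrowthFunction φ) {ε : ℝ}
    (hε : (n : ℝ) * (qIndex φ / iIndex φ - 1) < ε) :
    ∃ q₀ p₀ : ℝ, 1 ≤ q₀ ∧ UniformMuckenhoupt q₀ φ ∧ 0 < p₀ ∧ UnifLowerType p₀ φ ∧
      (n : ℝ) ≤ n * q₀ / p₀ ∧ n * q₀ / p₀ < n + ε := by
  obtain ⟨-, -, hpos, -, -, ⟨p, hp0, -, hp⟩, hup, ⟨q, hq1, hq⟩⟩ := hφ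
  set Sq := {q : ℝ | 1 ≤ q ∧ UniformMuckenhoupt q φ}
  set Sp := {p : ℝ | 0 < p ∧ UnifLowerType p φ}
  have hSq : Sq.Nonempty := ⟨q, hq1, hq⟩
  have hSp : Sp.Nonempty := ⟨p, hp0, hp⟩
  have hSp_le : ∀ p ∈ Sp, p ≤ 1 := fun p hp => hp.2.le_one hup hpos
  have hSq_bdd : BddBelow Sq := ⟨1, fun q hq => hq.1⟩
  have hSp_bdd : BddAbove Sp := ⟨1, hSp_le⟩
  have hI0 : 0 < iIndex φ := hp0.trans_le (le_csSup hSp_bdd ⟨hp0, hp⟩)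
  have hQI : n * qIndex φ < (n + ε) * iIndex φ := by
    rw [mul_sub, mul_div_assoc', sub_lt_iff_lt_add, div_lt_iff₀ hI0] at hε
    linarith
  -- `n q < (n + ε) p` is an open condition holding at `(q, p) = (inf Sq, sup Sp)`
  obtain ⟨p₀, hp₀, hp₀S⟩ := mem_closure_iff.1 (csSup_mem_closure hSp hSp_bdd)
    {p | n * qIndex φ < (n + ε) * p} (isOpen_lt continuous_const (continuous_const_mul _)) hQI
  obtain ⟨q₀, hq₀, hq₀S⟩ := mem_closure_iff.1 (csInf_mem_closure hSq hSq_bdd)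
    {q | n * q < (n + ε) * p₀} (isOpen_lt (continuous_const_mul _) continuous_const) hp₀
  have hp₀1 := hSp_le p₀ hp₀S
  refine ⟨q₀, p₀, hq₀S.1, hq₀S.2, hp₀S.1, hp₀S.2, ?_, ?_⟩
  · rw [le_div_iff₀ hp₀S.1]
    nlinarith [hq₀S.1, hp₀S.1]
  · rw [div_lt_iff₀ hp₀S.1]
    linarith [hq₀.out]

/-- `M` is the second factor of the `𝔸_q` condition on `B(x,R)`; Hölder's inequality bounds
`|E|^q` by `φ(E,t) M`. -/
theorem UniformMuckenhoupt.exists_factor {q : ℝ} (hA : UniformMuckenhoupt q φ) (hq : 1 ≤ q)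
    (hm : ∀ t, Measurable fun y => φ y t) (hpos : ∀ y t, 0 < t → 0 < φ y t) :
    ∃ C : ℝ≥0∞, C ≠ ⊤ ∧ ∀ t, 0 < t → ∀ x R, 0 < R → ∃ M : ℝ≥0∞,
      (∀ E ⊆ ball x R, volume E ^ q ≤ (∫⁻ y in E, ENNReal.ofReal (φ y t)) * M) ∧
      (∫⁻ y in ball x R, ENNReal.ofReal (φ y t)) * M ≤ C * volume (ball x R) ^ q := by
  rcases hq.eq_or_lt with rfl | hq
  · rw [UniformMuckenhoupt, if_pos rfl] at hA
    obtain ⟨C, hC, hA⟩ := hA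
    refine ⟨C, hC, fun t ht x R hR =>
      ⟨essSup (fun y => ENNReal.ofReal (φ y t)⁻¹) (volume.restrict (ball x R)), fun E hE => ?_, ?_⟩⟩
    · rw [ENNReal.rpow_one]
      exact measure_le_setLIntegral_mul_essSup_inv (hpos · t ht) (hm t) hE
    · rw [ENNReal.rpow_one]
      exact hA t ht.le x R hR
  · rw [UniformMuckenhoupt, if_neg hq.ne'] at hA
    obtain ⟨C, hC, hA⟩ := hA
    exact ⟨C, hC, fun t ht x R hR => ⟨_, fun E hE =>
      measure_rpow_le_setLIntegral_mul_setLIntegral_rpow hq (hpos · t ht) (hm t) hE,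
      hA t ht.le x R hR⟩⟩

theorem volume_ball_rpow_eq {x : EuclideanSpace ℝ (Fin n)} {r R : ℝ} (hr : 0 < r) (hR : 0 < R)
    {q : ℝ} (hq : 0 ≤ q) :
    volume (ball x R) ^ q = ENNReal.ofReal ((R / r) ^ (n * q)) * volume (ball x r) ^ q := by
  have := addHaar_ball_scale volume x (div_pos hR hr) r
  rw [div_mul_cancel₀ R hr.ne', finrank_euclideanSpace_fin] at this
  rw [this, ENNReal.mul_rpow_of_nonneg _ _ hq, ENNReal.ofReal_rpow_of_nonneg (by positivity) hq,
    ← Real.rpow_natCast, ← Real.rpow_mul (div_pos hR hr).le]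

theorem UniformMuckenhoupt.exists_setLIntegral_ball_le {q : ℝ} (hA : UniformMuckenhoupt q φ)
    (hq : 1 ≤ q) (hm : ∀ t, Measurable fun y => φ y t) (hpos : ∀ y t, 0 < t → 0 < φ y t) :
    ∃ C : ℝ, 0 ≤ C ∧ ∀ t, 0 < t → ∀ x r R, 0 < r → r ≤ R →
      ∫⁻ y in ball x R, ENNReal.ofReal (φ y t) ≤
        ENNReal.ofReal (C * (R / r) ^ (n * q)) * ∫⁻ y in ball x r, ENNReal.ofReal (φ y t) := by
  obtain ⟨C, hC, hA⟩ := hA.exists_factor hq hm hpos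
  refine ⟨C.toReal, ENNReal.toReal_nonneg, fun t ht x r R hr hrR => ?_⟩
  obtain ⟨M, hE, hB⟩ := hA t ht x R (hr.trans_le hrR)
  have hV0 : volume (ball x r) ^ q ≠ 0 :=
    (ENNReal.rpow_pos (measure_ball_pos _ x hr) measure_ball_lt_top.ne).ne'
  have hVt : volume (ball x r) ^ q ≠ ⊤ :=
    ENNReal.rpow_ne_top_of_nonneg (by linarith) measure_ball_lt_top.ne
  refine (ENNReal.mul_le_mul_iff_left hV0 hVt).1 ?_
  calc (∫⁻ y in ball x R, ENNReal.ofReal (φ y t)) * volume (ball x r) ^ q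
      ≤ (∫⁻ y in ball x R, ENNReal.ofReal (φ y t)) *
          ((∫⁻ y in ball x r, ENNReal.ofReal (φ y t)) * M) := by
        gcongr; exact hE _ (ball_subset_ball hrR)
    _ = ((∫⁻ y in ball x R, ENNReal.ofReal (φ y t)) * M) *
          ∫⁻ y in ball x r, ENNReal.ofReal (φ y t) := by ring
    _ ≤ C * volume (ball x R) ^ q * ∫⁻ y in ball x r, ENNReal.ofReal (φ y t) := by gcongr
    _ = _ := by
        rw [volume_ball_rpow_eq hr (hr.trans_le hrR) (by linarith),
          ENNReal.ofReal_mul ENNReal.toReal_nonneg, ENNReal.ofReal_toReal hC]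
        ring

theorem UniformMuckenhoupt.setLIntegral_ball_ne_top {q : ℝ} (hA : UniformMuckenhoupt q φ)
    (hq : 1 ≤ q) (hm : ∀ t, Measurable fun y => φ y t) (hpos : ∀ y t, 0 < t → 0 < φ y t)
    {t : ℝ} (ht : 0 < t) (x : EuclideanSpace ℝ (Fin n)) {R : ℝ} (hR : 0 < R) :
    ∫⁻ y in ball x R, ENNReal.ofReal (φ y t) ≠ ⊤ := by
  obtain ⟨C, hC, hA⟩ := hA.exists_factor hq hm hpos
  obtain ⟨M, hE, hB⟩ := hA t ht x R hR
  have hM : M ≠ 0 := by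
    rintro rfl
    have := (ENNReal.rpow_pos (measure_ball_pos volume x hR) measure_ball_lt_top.ne).trans_le
      (hE _ subset_rfl)
    simp at this
  intro htop
  rw [htop, ENNReal.top_mul hM, top_le_iff] at hB
  exact ENNReal.mul_ne_top hC (ENNReal.rpow_ne_top_of_nonneg (by linarith)
    measure_ball_lt_top.ne) hB

theorem UnifLowerType.exists_setLIntegral_le {p : ℝ} (hp : UnifLowerType p φ) :
    ∃ C : ℝ, 0 < C ∧ ∀ (S : Set (EuclideanSpace ℝ (Fin n))) (s t : ℝ), 0 ≤ s → s ≤ 1 → 0 ≤ t →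
      ∫⁻ y in S, ENNReal.ofReal (φ y (s * t)) ≤
        ENNReal.ofReal (C * s ^ p) * ∫⁻ y in S, ENNReal.ofReal (φ y t) := by
  obtain ⟨C, hC, hlow⟩ := hp
  refine ⟨C, hC, fun S s t hs0 hs1 ht => ?_⟩
  rw [← lintegral_const_mul' _ _ ENNReal.ofReal_ne_top]
  exact lintegral_mono fun y => by
    rw [← ENNReal.ofReal_mul (by positivity)]
    exact ENNReal.ofReal_le_ofReal (hlow y s t hs0 hs1 ht)

theorem luxNorm_le_ofReal_mul {B B' : Set (EuclideanSpace ℝ (Fin n))} {a : ℝ} (ha : 0 < a)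
    (h : ∀ t, 0 < t →
      ∫⁻ y in B', ENNReal.ofReal (φ y (a⁻¹ * t)) ≤ ∫⁻ y in B, ENNReal.ofReal (φ y t)) :
    luxNorm φ B' ≤ ENNReal.ofReal a * luxNorm φ B := by
  have ha' : ENNReal.ofReal a ≠ 0 := (ENNReal.ofReal_pos.2 ha).ne'
  rw [mul_comm, ← ENNReal.div_le_iff_le_mul (.inl ha') (.inl ENNReal.ofReal_ne_top)]
  refine le_sInf fun lam ⟨hlam0, hlam⟩ => ?_
  rw [ENNReal.div_le_iff_le_mul (.inl ha') (.inl ENNReal.ofReal_ne_top), mul_comm]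
  rcases eq_or_ne lam ⊤ with rfl | hlamt
  · rw [ENNReal.mul_top ha']
    exact le_top
  refine sInf_le ⟨ENNReal.mul_pos ha' hlam0.ne', ?_⟩
  have ht : 0 < lam⁻¹.toReal :=
    ENNReal.toReal_pos (ENNReal.inv_ne_zero.2 hlamt) (ENNReal.inv_ne_top.2 hlam0.ne')
  rw [ENNReal.mul_inv (.inl ha') (.inl ENNReal.ofReal_ne_top), ENNReal.toReal_mul,
    ENNReal.toReal_inv, ENNReal.toReal_ofReal ha.le]
  exact (h _ ht).trans hlam

theorem luxNorm_ball_ne_top {q p : ℝ} (hA : UniformMuckenhoupt q φ) (hq : 1 ≤ q)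
    (hp : 0 < p) (hlow : UnifLowerType p φ) (hm : ∀ t, Measurable fun y => φ y t)
    (hpos : ∀ y t, 0 < t → 0 < φ y t) (x : EuclideanSpace ℝ (Fin n)) {R : ℝ} (hR : 0 < R) :
    luxNorm φ (ball x R) ≠ ⊤ := by
  obtain ⟨C, hC, hlow⟩ := hlow.exists_setLIntegral_le
  set I := ∫⁻ y in ball x R, ENNReal.ofReal (φ y 1)
  have hI : I ≠ ⊤ := hA.setLIntegral_ball_ne_top hq hm hpos one_pos x hR
  obtain ⟨s, ⟨hs0, hs1⟩, hs⟩ := exists_mem_Ioc_mul_rpow_lt_one (C * I.toReal) hp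
  refine ne_top_of_le_ne_top (b := ENNReal.ofReal s⁻¹) ENNReal.ofReal_ne_top (sInf_le ⟨?_, ?_⟩)
  · exact ENNReal.ofReal_pos.2 (inv_pos.2 hs0)
  · rw [ENNReal.toReal_inv, ENNReal.toReal_ofReal (inv_nonneg.2 hs0.le), inv_inv]
    calc ∫⁻ y in ball x R, ENNReal.ofReal (φ y s)
        = ∫⁻ y in ball x R, ENNReal.ofReal (φ y (s * 1)) := by rw [mul_one]
      _ ≤ ENNReal.ofReal (C * s ^ p) * I := hlow _ s 1 hs0.le hs1 zero_le_one
      _ = ENNReal.ofReal (C * I.toReal * s ^ p) := by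
          rw [← ENNReal.ofReal_toReal hI, ← ENNReal.ofReal_mul (by positivity),
            ENNReal.toReal_ofReal ENNReal.toReal_nonneg, mul_right_comm]
      _ ≤ 1 := ENNReal.ofReal_le_one.2 hs.le

theorem UniformMuckenhoupt.exists_luxNorm_ball_le {q p : ℝ} (hA : UniformMuckenhoupt q φ)
    (hq : 1 ≤ q) (hp : 0 < p) (hlow : UnifLowerType p φ) (hm : ∀ t, Measurable fun y => φ y t)
    (hpos : ∀ y t, 0 < t → 0 < φ y t) :
    ∃ K : ℝ, 0 < K ∧ ∀ x r R, 0 < r → r ≤ R →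
      luxNorm φ (ball x R) ≤ ENNReal.ofReal (K * (R / r) ^ (n * q / p)) * luxNorm φ (ball x r) := by
  obtain ⟨CA, hCA, hdoub⟩ := hA.exists_setLIntegral_ball_le hq hm hpos
  obtain ⟨Cp, hCp, hlow⟩ := hlow.exists_setLIntegral_le
  set K := max 1 ((Cp * CA) ^ p⁻¹)
  have hK1 : 1 ≤ K := le_max_left _ _
  have hKp : Cp * CA ≤ K ^ p := by
    calc Cp * CA = ((Cp * CA) ^ p⁻¹) ^ p := (Real.rpow_inv_rpow (by positivity) hp.ne').symm
      _ ≤ K ^ p := by gcongr; exact le_max_right _ _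
  refine ⟨K, one_pos.trans_le hK1, fun x r R hr hrR => ?_⟩
  have hRr : 1 ≤ R / r := (one_le_div hr).2 hrR
  set a := K * (R / r) ^ (n * q / p)
  have ha : 1 ≤ a := one_le_mul_of_one_le_of_one_le hK1 (Real.one_le_rpow hRr (by positivity))
  -- the doubling constant `CA (R/r)^(nq)` is absorbed by the lower-type gain `Cp a^(-p)`
  have hgain : Cp * a⁻¹ ^ p * (CA * (R / r) ^ (n * q)) ≤ 1 := by
    have hap : a ^ p = K ^ p * (R / r) ^ (n * q) := by
      rw [Real.mul_rpow (by positivity) (by positivity), ← Real.rpow_mul (by positivity),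
        div_mul_cancel₀ _ hp.ne']
    rw [Real.inv_rpow (by positivity), hap]
    have : 0 < (R / r) ^ (n * q) := by positivity
    rw [← sub_nonneg]
    field_simp
    nlinarith
  refine luxNorm_le_ofReal_mul (by positivity) fun t ht => ?_
  calc ∫⁻ y in ball x R, ENNReal.ofReal (φ y (a⁻¹ * t))
      ≤ ENNReal.ofReal (Cp * a⁻¹ ^ p) * ∫⁻ y in ball x R, ENNReal.ofReal (φ y t) :=
        hlow _ _ _ (by positivity) (inv_le_one_of_one_le₀ ha) ht.le
    _ ≤ ENNReal.ofReal (Cp * a⁻¹ ^ p) *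
          (ENNReal.ofReal (CA * (R / r) ^ (n * q)) * ∫⁻ y in ball x r, ENNReal.ofReal (φ y t)) := by
        gcongr; exact hdoub t ht x r R hr hrR
    _ ≤ ∫⁻ y in ball x r, ENNReal.ofReal (φ y t) := by
        rw [← mul_assoc, ← ENNReal.ofReal_mul (by positivity)]
        exact mul_le_of_le_one_left zero_le (ENNReal.ofReal_le_one.2 hgain)

theorem ballAvg_eq_setAverage (f : EuclideanSpace ℝ (Fin n) → ℝ)
    (c : EuclideanSpace ℝ (Fin n)) (r : ℝ) : ballAvg f c r = ⨍ y in ball c r, f y := by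
  rw [ballAvg, setAverage_eq, measureReal_def, smul_eq_mul]

theorem setIntegral_abs_sub_setAverage_ball_two_pow_le {f : EuclideanSpace ℝ (Fin n) → ℝ}
    {x₀ : EuclideanSpace ℝ (Fin n)} {δ N K a : ℝ} (hδ : 0 < δ) (hN : 0 ≤ N) (hK : 0 ≤ K)
    (hgrowth : ∀ R, δ ≤ R →
      luxNorm φ (ball x₀ R) ≤ ENNReal.ofReal (K * (R / δ) ^ a) * luxNorm φ (ball x₀ δ))
    (hL : luxNorm φ (ball x₀ δ) ≠ ⊤)
    (hbmo : ∀ r, 0 < r →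
      ∫ x in ball x₀ r, |f x - ballAvg f x₀ r| ≤ N * (luxNorm φ (ball x₀ r)).toReal) (j : ℕ) :
    ∫ x in ball x₀ (2 ^ j * δ), |f x - ⨍ y in ball x₀ (2 ^ j * δ), f y| ≤
      N * K * (luxNorm φ (ball x₀ δ)).toReal * (2 ^ a) ^ j := by
  rw [← ballAvg_eq_setAverage]
  refine (hbmo _ (by positivity)).trans ?_
  have := ENNReal.toReal_mono (ENNReal.mul_ne_top ENNReal.ofReal_ne_top hL)
    (hgrowth (2 ^ j * δ) (le_mul_of_one_le_left hδ.le (one_le_pow₀ one_le_two)))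
  rw [ENNReal.toReal_mul, ENNReal.toReal_ofReal (by positivity), mul_div_cancel_right₀ _ hδ.ne',
    ← Real.rpow_pow_comm zero_le_two] at this
  calc N * (luxNorm φ (ball x₀ (2 ^ j * δ))).toReal
      ≤ N * (K * (2 ^ a) ^ j * (luxNorm φ (ball x₀ δ)).toReal) := by gcongr
    _ = N * K * (luxNorm φ (ball x₀ δ)).toReal * (2 ^ a) ^ j := by ring

end GrowthFunction

/-- for `ε > n(q(φ)/i(φ) − 1)` and a ball `B₀ = B(x₀,δ)`, every
`f ∈ BMO_φ(ℝⁿ)` (with `BMO_φ` norm at most `N`) satisfies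
`∫ δ^ε |f(x)−f_{B₀}| / (δ^{n+ε} + |x−x₀|^{n+ε}) dx ≤ C (‖χ_{B₀}‖_{L^φ}/|B₀|) N`. -/
theorem stmt_18 {n : ℕ} (φ : EuclideanSpace ℝ (Fin n) → ℝ → ℝ)
    (hφ : IsGrowthFunction φ)
    (ε : ℝ) (hε : (n : ℝ) * (qIndex φ / iIndex φ - 1) < ε)
    (x₀ : EuclideanSpace ℝ (Fin n)) (δ : ℝ) (hδ : 0 < δ) :
    ∃ C : ℝ, 0 < C ∧
      ∀ (f : EuclideanSpace ℝ (Fin n) → ℝ) (N : ℝ), LocallyIntegrable f volume → 0 < N →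
        (∀ (c : EuclideanSpace ℝ (Fin n)) (r : ℝ), 0 < r →
          (∫ x in ball c r, |f x - ballAvg f c r|) ≤ N * (luxNorm φ (ball c r)).toReal) →
        ∫⁻ x, ENNReal.ofReal (δ ^ ε * |f x - ballAvg f x₀ δ| /
            (δ ^ ((n : ℝ) + ε) + ‖x - x₀‖ ^ ((n : ℝ) + ε))) ≤
          ENNReal.ofReal (C * (luxNorm φ (ball x₀ δ)).toReal /
            (volume (ball x₀ δ)).toReal * N) := by
  obtain ⟨q₀, p₀, hq₀, hA, hp₀, hlow, hna, haε⟩ := hφ.exists_exponents hε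
  obtain ⟨-, -, hpos, -, hm, -⟩ := hφ
  obtain ⟨K, hK, hgrowth⟩ := hA.exists_luxNorm_ball_le hq₀ hp₀ hlow hm hpos
  have hL := luxNorm_ball_ne_top hA hq₀ hp₀ hlow hm hpos x₀ hδ
  have hV : 0 < (volume (ball x₀ δ)).toReal :=
    ENNReal.toReal_pos (measure_ball_pos _ _ hδ).ne' measure_ball_lt_top.ne
  set c : ℝ := 2 ^ (n * q₀ / p₀)
  have hc : 2 ^ Module.finrank ℝ (EuclideanSpace ℝ (Fin n)) ≤ c := by
    rw [finrank_euclideanSpace_fin, ← Real.rpow_natCast]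
    exact Real.rpow_le_rpow_of_exponent_le one_le_two hna
  have hcs : c < 2 ^ ((n : ℝ) + ε) := Real.rpow_lt_rpow_of_exponent_lt one_lt_two haε
  have hρ : 0 < 1 - c / 2 ^ ((n : ℝ) + ε) := sub_pos.2 ((div_lt_one (by positivity)).2 hcs)
  refine ⟨(volume (ball x₀ δ)).toReal * δ ^ ε * (2 ^ ((n : ℝ) + ε) / δ ^ ((n : ℝ) + ε) * 2 ^ n *
    K / (1 - c / 2 ^ ((n : ℝ) + ε)) ^ 2), by positivity, fun f N hf hN hbmo => ?_⟩
  have key := lintegral_abs_sub_setAverage_div_le volume hf x₀ hδ hc hcs (by positivity)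
    (setIntegral_abs_sub_setAverage_ball_two_pow_le hδ hN.le hK.le (hgrowth x₀ δ · hδ) hL
      (hbmo x₀))
  rw [finrank_euclideanSpace_fin] at key
  simp_rw [ballAvg_eq_setAverage, mul_div_assoc, ENNReal.ofReal_mul (Real.rpow_nonneg hδ.le ε)]
  rw [lintegral_const_mul' _ _ ENNReal.ofReal_ne_top]
  calc _ ≤ _ := mul_le_mul_right key _
    _ = _ := by
        rw [← ENNReal.ofReal_mul (by positivity)]
        congr 1
        field_simp
end
end

section
/- Let φ be a growth function with φ ∈ 𝔸_{q₀}(ℝⁿ) and φ of uniformly lower type p₀ ∈ (0,1]. Then for every ball B ⊂ ℝⁿ and every j ∈ ℤ₊, ‖χ_{2^j B}‖_{L^φ(ℝⁿ)} ≤ C 2^{j n q₀ / p₀} ‖χ_B‖_{L^φ(ℝⁿ)} for a constant C independent of B and j. -/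
open MeasureTheory Metric Filter ENNReal

noncomputable section

lemma volBall_pow2 {n : ℕ} (c : EuclideanSpace ℝ (Fin n)) {r : ℝ} (hr : 0 < r) (j : ℕ) :
    volume (ball c ((2:ℝ)^j * r)) = ENNReal.ofReal ((2:ℝ)^(j*n)) * volume (ball c r) := by
  have hR : (0:ℝ) < (2:ℝ)^j * r := by positivity
  rcases Nat.eq_zero_or_pos n with hn | hn
  · subst hn
    have hball : ∀ ρ : ℝ, 0 < ρ → ball c ρ = Set.univ := by
      intro ρ hρ
      ext x
      simp [Metric.mem_ball, Subsingleton.elim x c, hρ]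
    rw [hball _ hR, hball _ hr]
    simp
  · haveI : Nontrivial (EuclideanSpace ℝ (Fin n)) := by
      apply Module.nontrivial_of_finrank_pos (R := ℝ)
      rw [finrank_euclideanSpace_fin]; exact hn
    rw [Measure.addHaar_ball volume c hR.le, Measure.addHaar_ball volume c hr.le,
      finrank_euclideanSpace_fin]
    rw [mul_pow, ← pow_mul, ENNReal.ofReal_mul (by positivity), mul_assoc]

/-- the key doubling estimate coming from `UniformMuckenhoupt q φ` -/
lemma doubling {n : ℕ} (φ : EuclideanSpace ℝ (Fin n) → ℝ → ℝ)
    (hmeas : ∀ t, Measurable fun x => φ x t) (hpos : ∀ x t, 0 < t → 0 < φ x t)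
    (q : ℝ) (hq : 1 ≤ q) (hA : UniformMuckenhoupt q φ) :
    ∃ K : ℝ≥0∞, K ≠ ⊤ ∧ ∀ t : ℝ, 0 < t → ∀ (c : EuclideanSpace ℝ (Fin n)) (r : ℝ), 0 < r →
      ∀ j : ℕ, (∫⁻ y in ball c ((2:ℝ)^j * r), ENNReal.ofReal (φ y t)) ≤
        K * ENNReal.ofReal ((2:ℝ)^(j*n)) ^ q * ∫⁻ y in ball c r, ENNReal.ofReal (φ y t) := by
  -- extract the constant first
  have hCex : ∃ C : ℝ≥0∞, C ≠ ⊤ ∧ ∀ t : ℝ, 0 < t →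
      ∀ (c : EuclideanSpace ℝ (Fin n)) (r : ℝ), 0 < r → ∀ j : ℕ,
      (∫⁻ y in ball c ((2:ℝ)^j * r), ENNReal.ofReal (φ y t)) * (volume (ball c r)) ^ q ≤
        C * (volume (ball c ((2:ℝ)^j * r))) ^ q * ∫⁻ y in ball c r, ENNReal.ofReal (φ y t) := by
    have hrR : ∀ (r : ℝ), 0 < r → ∀ j : ℕ, r ≤ (2:ℝ)^j * r := fun r hr j =>
      le_mul_of_one_le_left hr.le (one_le_pow₀ (by norm_num))
    by_cases hq1 : q = 1
    · subst hq1
      rw [UniformMuckenhoupt, if_pos rfl] at hA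
      obtain ⟨C, hCtop, h⟩ := hA
      refine ⟨C, hCtop, fun t ht c r hr j => ?_⟩
      set R := (2:ℝ)^j * r with hRdef
      have hR : 0 < R := by positivity
      set w : EuclideanSpace ℝ (Fin n) → ℝ≥0∞ := fun y => ENNReal.ofReal (φ y t) with hw
      have hw0 : ∀ y, w y ≠ 0 := fun y => (ENNReal.ofReal_pos.2 (hpos y t ht)).ne'
      have hofinv : (fun y => ENNReal.ofReal ((φ y t)⁻¹)) = fun y => (w y)⁻¹ := by
        funext y; exact ENNReal.ofReal_inv_of_pos (hpos y t ht)
      set Sr := essSup (fun y => (w y)⁻¹) (volume.restrict (ball c r)) with hSr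
      set SR := essSup (fun y => (w y)⁻¹) (volume.restrict (ball c R)) with hSR
      have hmono : Sr ≤ SR := essSup_mono_measure (Measure.absolutelyContinuous_of_le
        (Measure.restrict_mono (ball_subset_ball (hrR r hr j)) le_rfl))
      have hIr_pos : 0 < ∫⁻ y in ball c r, w y := by
        rw [lintegral_pos_iff_support ((hmeas t).ennreal_ofReal)]
        have : Function.support w = Set.univ := Set.eq_univ_of_forall fun y => hw0 y
        rw [this]
        rw [Measure.restrict_apply_univ]
        exact measure_ball_pos volume c hr
      have hae : ∀ᵐ y ∂(volume.restrict (ball c r)), (w y)⁻¹ ≤ Sr :=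
        _root_.ae_le_essSup (f := fun y => (w y)⁻¹)
      have hS0 : Sr ≠ 0 := by
        intro h0
        have hfalse : ∀ᵐ y ∂(volume.restrict (ball c r)), False := by
          refine hae.mono fun y hy => ?_
          rw [h0, le_zero_iff, ENNReal.inv_eq_zero] at hy
          exact ENNReal.ofReal_ne_top hy
        rw [ae_iff] at hfalse
        simp at hfalse
        exact absurd hfalse (measure_ball_pos volume c hr).ne'
      have stepA : volume (ball c r) ≤ (∫⁻ y in ball c r, w y) * Sr := by
        by_cases hS : Sr = ⊤
        · rw [hS, ENNReal.mul_top hIr_pos.ne']; exact le_top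
        · have hlow2 : ∀ᵐ y ∂(volume.restrict (ball c r)), Sr⁻¹ ≤ w y := by
            refine hae.mono fun y hy => ?_
            simpa using ENNReal.inv_le_inv' hy
          have h1 : Sr⁻¹ * volume (ball c r) ≤ ∫⁻ y in ball c r, w y := by
            rw [← setLIntegral_const]
            exact lintegral_mono_ae hlow2
          calc volume (ball c r) = Sr * (Sr⁻¹ * volume (ball c r)) := by
                rw [← mul_assoc, ENNReal.mul_inv_cancel hS0 hS, one_mul]
            _ ≤ Sr * ((∫⁻ y in ball c r, w y)) := mul_le_mul_right h1 _
            _ = (∫⁻ y in ball c r, w y) * Sr := mul_comm _ _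
      have hbig := h t ht.le c R hR
      rw [hofinv] at hbig
      simp only [ENNReal.rpow_one]
      calc (∫⁻ y in ball c R, w y) * volume (ball c r)
          ≤ (∫⁻ y in ball c R, w y) * ((∫⁻ y in ball c r, w y) * Sr) :=
            mul_le_mul_right stepA _
        _ = (∫⁻ y in ball c r, w y) * ((∫⁻ y in ball c R, w y) * Sr) := by ring
        _ ≤ (∫⁻ y in ball c r, w y) * ((∫⁻ y in ball c R, w y) * SR) :=
            mul_le_mul_right (mul_le_mul_right hmono _) _
        _ ≤ (∫⁻ y in ball c r, w y) * (C * volume (ball c R)) := mul_le_mul_right hbig _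
        _ = C * volume (ball c R) * ∫⁻ y in ball c r, w y := by ring
    · have hq' : 1 < q := hq.lt_of_ne fun h => hq1 h.symm
      have hqne : q ≠ 0 := by linarith
      have hq1ne : q - 1 ≠ 0 := sub_ne_zero.2 hq1
      rw [UniformMuckenhoupt, if_neg hq1] at hA
      obtain ⟨C, hCtop, h⟩ := hA
      refine ⟨C, hCtop, fun t ht c r hr j => ?_⟩
      set R := (2:ℝ)^j * r with hRdef
      have hR : 0 < R := by positivity
      set w : EuclideanSpace ℝ (Fin n) → ℝ≥0∞ := fun y => ENNReal.ofReal (φ y t) with hw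
      have hw0 : ∀ y, w y ≠ 0 := fun y => (ENNReal.ofReal_pos.2 (hpos y t ht)).ne'
      have hwtop : ∀ y, w y ≠ ⊤ := fun y => ENNReal.ofReal_ne_top
      have hwm : Measurable w := (hmeas t).ennreal_ofReal
      have hconj : q.HolderConjugate (q/(q-1)) := Real.HolderConjugate.conjExponent hq'
      have holder := ENNReal.lintegral_mul_le_Lp_mul_Lq (volume.restrict (ball c r)) hconj
        ((hwm.pow_const (1/q)).aemeasurable) ((hwm.pow_const (-(1/q))).aemeasurable)
      have hfg1 : ∀ y, w y ^ ((1:ℝ)/q) * w y ^ (-((1:ℝ)/q)) = 1 := by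
        intro y
        rw [← ENNReal.rpow_add _ _ (hw0 y) (hwtop y),
          show (1:ℝ)/q + -((1:ℝ)/q) = 0 by ring, ENNReal.rpow_zero]
      have hq0' : (0:ℝ) ≤ q := by linarith
      have hL : (∫⁻ a in ball c r,
          ((fun x => w x ^ ((1:ℝ)/q)) * fun x => w x ^ (-((1:ℝ)/q))) a) = volume (ball c r) := by
        calc (∫⁻ a in ball c r, ((fun x => w x ^ ((1:ℝ)/q)) * fun x => w x ^ (-((1:ℝ)/q))) a)
            = ∫⁻ _ in ball c r, (1:ℝ≥0∞) := lintegral_congr fun a => by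
              simpa using hfg1 a
          _ = volume (ball c r) := by rw [lintegral_one, Measure.restrict_apply_univ]
      have hf : (∫⁻ a in ball c r, (w a ^ ((1:ℝ)/q)) ^ q) = ∫⁻ a in ball c r, w a :=
        lintegral_congr fun a => by
          rw [← ENNReal.rpow_mul, one_div_mul_cancel hqne, ENNReal.rpow_one]
      have hg : (∫⁻ a in ball c r, (w a ^ (-((1:ℝ)/q))) ^ (q/(q-1)))
          = ∫⁻ a in ball c r, w a ^ (-(1/(q-1))) :=
        lintegral_congr fun a => by
          rw [← ENNReal.rpow_mul]
          congr 1
          field_simp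
      rw [hL, hf, hg] at holder
      have key1 : volume (ball c r) ^ q ≤ (∫⁻ y in ball c r, w y) *
          (∫⁻ y in ball c r, w y ^ (-(1/(q-1)))) ^ (q-1) := by
        have h2 := ENNReal.rpow_le_rpow holder hq0'
        rw [ENNReal.mul_rpow_of_nonneg _ _ hq0', ← ENNReal.rpow_mul, ← ENNReal.rpow_mul,
          one_div_mul_cancel hqne, ENNReal.rpow_one,
          show 1/(q/(q-1)) * q = q - 1 by field_simp] at h2
        exact h2
      have hYmono : (∫⁻ y in ball c r, w y ^ (-(1/(q-1)))) ^ (q-1)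
          ≤ (∫⁻ y in ball c R, w y ^ (-(1/(q-1)))) ^ (q-1) :=
        ENNReal.rpow_le_rpow (lintegral_mono_set (ball_subset_ball (hrR r hr j)))
          (by linarith)
      have hbig := h t ht.le c R hR
      calc (∫⁻ y in ball c R, w y) * volume (ball c r) ^ q
          ≤ (∫⁻ y in ball c R, w y) * ((∫⁻ y in ball c r, w y) *
            (∫⁻ y in ball c r, w y ^ (-(1/(q-1)))) ^ (q-1)) := mul_le_mul_right key1 _
        _ = (∫⁻ y in ball c r, w y) * ((∫⁻ y in ball c R, w y) *
            (∫⁻ y in ball c r, w y ^ (-(1/(q-1)))) ^ (q-1)) := by ring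
        _ ≤ (∫⁻ y in ball c r, w y) * ((∫⁻ y in ball c R, w y) *
            (∫⁻ y in ball c R, w y ^ (-(1/(q-1)))) ^ (q-1)) :=
            mul_le_mul_right (mul_le_mul_right hYmono _) _
        _ ≤ (∫⁻ y in ball c r, w y) * (C * volume (ball c R) ^ q) := mul_le_mul_right hbig _
        _ = C * volume (ball c R) ^ q * ∫⁻ y in ball c r, w y := by ring
  obtain ⟨C, hCtop, hC⟩ := hCex
  refine ⟨C, hCtop, fun t ht c r hr j => ?_⟩
  have hμr0 : volume (ball c r) ≠ 0 := (measure_ball_pos volume c hr).ne'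
  have hμrtop : volume (ball c r) ≠ ⊤ := measure_ball_lt_top.ne
  have hq0 : (0:ℝ) ≤ q := le_trans zero_le_one hq
  have hpow0 : (volume (ball c r)) ^ q ≠ 0 := by
    simp [ENNReal.rpow_eq_zero_iff, hμr0, hμrtop]
  have hpowtop : (volume (ball c r)) ^ q ≠ ⊤ := ENNReal.rpow_ne_top_of_nonneg hq0 hμrtop
  have key := hC t ht c r hr j
  rw [volBall_pow2 c hr j, ENNReal.mul_rpow_of_nonneg _ _ hq0] at key
  rw [← ENNReal.mul_le_mul_iff_left hpow0 hpowtop]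
  calc (∫⁻ y in ball c ((2:ℝ)^j * r), ENNReal.ofReal (φ y t)) * (volume (ball c r)) ^ q
      ≤ C * (ENNReal.ofReal ((2:ℝ)^(j*n)) ^ q * (volume (ball c r)) ^ q) *
        ∫⁻ y in ball c r, ENNReal.ofReal (φ y t) := key
    _ = C * ENNReal.ofReal ((2:ℝ)^(j*n)) ^ q *
        (∫⁻ y in ball c r, ENNReal.ofReal (φ y t)) * (volume (ball c r)) ^ q := by ring


theorem stmt_19' {n : ℕ} (φ : EuclideanSpace ℝ (Fin n) → ℝ → ℝ)
    (hmeas : ∀ t, Measurable fun x => φ x t) (hpos : ∀ x t, 0 < t → 0 < φ x t)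
    (hzero : ∀ x, φ x 0 = 0)
    (q₀ : ℝ) (hq₀ : 1 ≤ q₀) (hA : UniformMuckenhoupt q₀ φ)
    (p₀ : ℝ) (hp₀ : 0 < p₀) (hp₀1 : p₀ ≤ 1) (hlow : UnifLowerType p₀ φ) :
    ∃ C : ℝ, 0 < C ∧
      ∀ (c : EuclideanSpace ℝ (Fin n)) (r : ℝ), 0 < r → ∀ j : ℕ,
        luxNorm φ (ball c ((2:ℝ) ^ j * r)) ≤
          ENNReal.ofReal (C * (2:ℝ) ^ ((j : ℝ) * (n : ℝ) * q₀ / p₀)) *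
            luxNorm φ (ball c r) := by
  obtain ⟨CL, hCL, hlowp⟩ := hlow
  obtain ⟨K, hKtop, hK⟩ := doubling φ hmeas hpos q₀ hq₀ hA
  set KA : ℝ := K.toReal + 1 with hKAdef
  have hKA : 0 < KA := by positivity
  have hKle : K ≤ ENNReal.ofReal KA := by
    rw [← ENNReal.ofReal_toReal hKtop]
    exact ENNReal.ofReal_le_ofReal (by linarith)
  set C : ℝ := max 1 ((CL * KA) ^ ((1:ℝ)/p₀)) with hCdef
  have hC1 : 1 ≤ C := le_max_left _ _
  have hCpos : 0 < C := lt_of_lt_of_le zero_lt_one hC1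
  have hCp : CL * KA ≤ C ^ p₀ := by
    have h1 : (CL * KA) ^ ((1:ℝ)/p₀) ≤ C := le_max_right _ _
    have h2 := Real.rpow_le_rpow (Real.rpow_nonneg (by positivity) _) h1 hp₀.le
    rwa [← Real.rpow_mul (by positivity), one_div_mul_cancel hp₀.ne', Real.rpow_one] at h2
  refine ⟨C, hCpos, fun c r hr j => ?_⟩
  set D : ℝ := C * (2:ℝ) ^ ((j : ℝ) * (n : ℝ) * q₀ / p₀) with hDdef
  have he0 : 0 ≤ (j : ℝ) * (n : ℝ) * q₀ / p₀ := by positivity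
  have hD0 : 0 < D := by positivity
  have hD1 : 1 ≤ D := by
    have h2e : (1:ℝ) ≤ (2:ℝ) ^ ((j : ℝ) * (n : ℝ) * q₀ / p₀) :=
      Real.one_le_rpow (by norm_num) he0
    nlinarith
  -- the key real inequality
  have hF : CL * D⁻¹ ^ p₀ * (KA * ((2:ℝ)^(j*n)) ^ q₀) ≤ 1 := by
    have hDp : D ^ p₀ = C ^ p₀ * (2:ℝ) ^ ((j : ℝ) * (n : ℝ) * q₀) := by
      rw [hDdef, Real.mul_rpow hCpos.le (by positivity)]
      congr 1
      rw [← Real.rpow_mul (by norm_num)]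
      congr 1
      field_simp
    have h2n : ((2:ℝ)^(j*n)) ^ q₀ = (2:ℝ) ^ ((j : ℝ) * (n : ℝ) * q₀) := by
      rw [← Real.rpow_natCast 2 (j*n), ← Real.rpow_mul (by norm_num)]
      push_cast
      ring_nf
    rw [h2n, Real.inv_rpow hD0.le, hDp]
    rw [show CL * (C ^ p₀ * (2:ℝ) ^ ((j:ℝ)*(n:ℝ)*q₀))⁻¹ * (KA * (2:ℝ) ^ ((j:ℝ)*(n:ℝ)*q₀))
        = (CL * KA) / (C ^ p₀) * ((2:ℝ) ^ ((j:ℝ)*(n:ℝ)*q₀) / (2:ℝ) ^ ((j:ℝ)*(n:ℝ)*q₀)) by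
          field_simp]
    rw [div_self (by positivity), mul_one]
    rw [div_le_one (by positivity)]
    exact hCp
  have hDne : ENNReal.ofReal D ≠ 0 := (ENNReal.ofReal_pos.2 hD0).ne'
  have hDnetop : ENNReal.ofReal D ≠ ⊤ := ENNReal.ofReal_ne_top
  have hmem : ∀ lam ∈ {lam : ℝ≥0∞ | 0 < lam ∧
      ∫⁻ x in ball c r, ENNReal.ofReal (φ x lam⁻¹.toReal) ≤ 1},
      luxNorm φ (ball c ((2:ℝ)^j * r)) ≤ ENNReal.ofReal D * lam := by
    rintro lam ⟨hlam, hint⟩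
    apply sInf_le
    refine ⟨ENNReal.mul_pos hDne hlam.ne', ?_⟩
    by_cases hltop : lam = ⊤
    · have : (ENNReal.ofReal D * lam)⁻¹ = 0 := by
        rw [hltop, ENNReal.mul_top hDne]
        simp
      simp [this, hzero]
    · set t : ℝ := lam⁻¹.toReal with htdef
      have ht : 0 < t := ENNReal.toReal_pos (ENNReal.inv_ne_zero.2 hltop)
        (ENNReal.inv_ne_top.2 hlam.ne')
      have htt : (ENNReal.ofReal D * lam)⁻¹.toReal = D⁻¹ * t := by
        rw [ENNReal.mul_inv (Or.inl hDne) (Or.inl hDnetop), ENNReal.toReal_mul,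
          ← ENNReal.ofReal_inv_of_pos hD0, ENNReal.toReal_ofReal (by positivity)]
      rw [htt]
      have step1 : (∫⁻ x in ball c ((2:ℝ)^j * r), ENNReal.ofReal (φ x (D⁻¹ * t)))
          ≤ ∫⁻ x in ball c ((2:ℝ)^j * r), ENNReal.ofReal (CL * D⁻¹ ^ p₀ * φ x t) := by
        refine setLIntegral_mono (((hmeas t).const_mul _).ennreal_ofReal) fun x _ => ?_
        exact ENNReal.ofReal_le_ofReal
          (hlowp x D⁻¹ t (by positivity) (inv_le_one_of_one_le₀ hD1) ht.le)
      have step2 : (∫⁻ x in ball c ((2:ℝ)^j * r), ENNReal.ofReal (CL * D⁻¹ ^ p₀ * φ x t))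
          = ENNReal.ofReal (CL * D⁻¹ ^ p₀) *
            ∫⁻ x in ball c ((2:ℝ)^j * r), ENNReal.ofReal (φ x t) := by
        rw [← lintegral_const_mul _ ((hmeas t).ennreal_ofReal)]
        refine lintegral_congr fun x => ?_
        rw [← ENNReal.ofReal_mul (by positivity)]
      calc (∫⁻ x in ball c ((2:ℝ)^j * r), ENNReal.ofReal (φ x (D⁻¹ * t)))
          ≤ ENNReal.ofReal (CL * D⁻¹ ^ p₀) *
            ∫⁻ x in ball c ((2:ℝ)^j * r), ENNReal.ofReal (φ x t) := step1.trans step2.le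
        _ ≤ ENNReal.ofReal (CL * D⁻¹ ^ p₀) *
            (K * ENNReal.ofReal ((2:ℝ)^(j*n)) ^ q₀ *
              ∫⁻ x in ball c r, ENNReal.ofReal (φ x t)) :=
            mul_le_mul_right (hK t ht c r hr j) _
        _ ≤ ENNReal.ofReal (CL * D⁻¹ ^ p₀) *
            (ENNReal.ofReal KA * ENNReal.ofReal ((2:ℝ)^(j*n)) ^ q₀ * 1) :=
            mul_le_mul_right (mul_le_mul' (mul_le_mul_left hKle _) hint) _
        _ = ENNReal.ofReal (CL * D⁻¹ ^ p₀ * (KA * ((2:ℝ)^(j*n)) ^ q₀)) := by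
            rw [mul_one, ENNReal.ofReal_rpow_of_pos (by positivity),
              ← ENNReal.ofReal_mul hKA.le, ← ENNReal.ofReal_mul (by positivity)]
        _ ≤ 1 := by
            rw [← ENNReal.ofReal_one]
            exact ENNReal.ofReal_le_ofReal hF
  have hdiv : luxNorm φ (ball c ((2:ℝ)^j * r)) / ENNReal.ofReal D ≤ luxNorm φ (ball c r) := by
    refine le_sInf fun lam hl => ?_
    rw [ENNReal.div_le_iff hDne hDnetop]
    exact (hmem lam hl).trans_eq (mul_comm _ _)
  have := (ENNReal.div_le_iff hDne hDnetop).mp hdiv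
  rwa [mul_comm (luxNorm φ (ball c r))] at this

/-- if `φ` is a growth function with `φ ∈ 𝔸_{q₀}(ℝⁿ)` and of uniformly
lower type `p₀ ∈ (0,1]`, then `‖χ_{2^j B}‖_{L^φ} ≤ C 2^{j n q₀/p₀} ‖χ_B‖_{L^φ}` for all
balls `B` and `j ∈ ℤ₊`. -/
theorem stmt_19 {n : ℕ} (φ : EuclideanSpace ℝ (Fin n) → ℝ → ℝ)
    (hφ : IsGrowthFunction φ)
    (q₀ : ℝ) (hq₀ : 1 ≤ q₀) (hA : UniformMuckenhoupt q₀ φ)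
    (p₀ : ℝ) (hp₀ : 0 < p₀) (hp₀1 : p₀ ≤ 1) (hlow : UnifLowerType p₀ φ) :
    ∃ C : ℝ, 0 < C ∧
      ∀ (c : EuclideanSpace ℝ (Fin n)) (r : ℝ), 0 < r → ∀ j : ℕ,
        luxNorm φ (ball c ((2:ℝ) ^ j * r)) ≤
          ENNReal.ofReal (C * (2:ℝ) ^ ((j : ℝ) * (n : ℝ) * q₀ / p₀)) *
            luxNorm φ (ball c r) :=
  stmt_19' φ hφ.2.2.2.2.1 hφ.2.2.1 hφ.2.1 q₀ hq₀ hA p₀ hp₀ hp₀1 hlow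
end
end
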